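/- arXiv:q-alg/9512001 — 8 statements merged into one kernel-verified Lean document; each statement's English description precedes it below -/
import Mathlib

section
/- Let N ≥ 2 be an integer and q ∈ ℂ with q ≠ 0. Then the braiding matrix σ of the bicovariant first-order differential calculus Γ_{+,z} on SL_q(N) satisfies the cubic relation (σ − id)(σ + q^{−2} id)(σ + q^{2} id) = 0 as an operator on ℂ^{N²} ⊗ ℂ^{N²}. -/
open scoped BigOperators

namespace Stmt0

/-- Kronecker delta with values in `ℂ`. -/
noncomputable def kron {N : ℕ} (i j : Fin N) : ℂ := if i = j then 1 else 0

/-- The standard R-matrix `R̂` of `SL_q(N)`: entry `R̂^{ij}_{kl}` (upper indices `i j`,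
lower indices `k l`). -/
noncomputable def Rhat (N : ℕ) (q : ℂ) (i j k l : Fin N) : ℂ :=
  q * kron i j * kron i k * kron j l
    + (1 - kron i j) * kron i l * kron j k
    + (q - q⁻¹) * (if i < j then 1 else 0) * kron i k * kron j l

/-- The inverse R-matrix: `R̂⁻¹ = R̂ − Q·id` with `Q = q − q⁻¹`. -/
noncomputable def Rinv (N : ℕ) (q : ℂ) (i j k l : Fin N) : ℂ :=
  Rhat N q i j k l - (q - q⁻¹) * kron i k * kron j l

/-- `D_i = q^{2i}` (indices `1,…,N`, realized as `i.1 + 1` for `i : Fin N`). -/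
noncomputable def D (N : ℕ) (q : ℂ) (i : Fin N) : ℂ := q ^ (2 * ((i.1 : ℤ) + 1))

/-- The braiding matrix of the calculus `Γ_{+,z}` on `SL_q(N)`, acting on
`ℂ^{N²} ⊗ ℂ^{N²}`: the row index is `((m,n),(r,s))`, the column index `((i,j),(k,l))`, and
`σ^{mnrs}_{ijkl} = D_k D_x^{−1} (R̂^{−1})^{pk}_{xj} R̂^{tn}_{yr} (R̂^{−1})^{xi}_{tm} R̂^{ys}_{pl}`
(summation over `x, p, t, y`). -/
noncomputable def sigmaPlus (N : ℕ) (q : ℂ) :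
    Matrix ((Fin N × Fin N) × (Fin N × Fin N)) ((Fin N × Fin N) × (Fin N × Fin N)) ℂ :=
  Matrix.of fun row col =>
    ∑ x : Fin N, ∑ p : Fin N, ∑ t : Fin N, ∑ y : Fin N,
      D N q col.2.1 * (D N q x)⁻¹ *
        Rinv N q p col.2.1 x col.1.2 * Rhat N q t row.1.2 y row.2.1 *
        Rinv N q x col.1.1 t row.1.1 * Rhat N q y row.2.2 p col.2.2

/-! ### Basic lemmas -/

@[simp] lemma kron_self {N : ℕ} (i : Fin N) : kron i i = 1 := by simp [kron]

lemma collapse2 {N : ℕ} (c : ℂ) (i j : Fin N) (X : Fin N → Fin N → ℂ) :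
    ∑ a : Fin N, ∑ b : Fin N, c * kron i a * kron j b * X a b = c * X i j := by
  simp [kron, ite_mul, mul_ite, Finset.sum_ite_eq]

lemma collapse2' {N : ℕ} (c : ℂ) (i j : Fin N) (X : Fin N → Fin N → ℂ) :
    ∑ a : Fin N, ∑ b : Fin N, c * kron i b * kron j a * X a b = c * X j i := by
  simp [kron, ite_mul, mul_ite, Finset.sum_ite_eq, Finset.sum_ite_eq']

lemma sum_Rhat_mul {N : ℕ} (q : ℂ) (i j : Fin N) (X : Fin N → Fin N → ℂ) :
    ∑ a : Fin N, ∑ b : Fin N, Rhat N q i j a b * X a b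
      = q * kron i j * X i j + (1 - kron i j) * X j i
        + (q - q⁻¹) * (if i < j then 1 else 0) * X i j := by
  simp only [Rhat, add_mul, Finset.sum_add_distrib]
  rw [collapse2, collapse2', collapse2]

lemma hecke_ent {N : ℕ} {q : ℂ} (hq : q ≠ 0) (i j k l : Fin N) :
    ∑ a : Fin N, ∑ b : Fin N, Rhat N q i j a b * Rhat N q a b k l
      = (q - q⁻¹) * Rhat N q i j k l + kron i k * kron j l := by
  rw [sum_Rhat_mul]
  rcases lt_trichotomy i j with h | h | h
  · have h1 : i ≠ j := ne_of_lt h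
    have h2 : ¬ j < i := not_lt.2 h.le
    have h3 : j ≠ i := h1.symm
    simp only [kron, if_neg h1, if_pos h, if_neg h3, if_neg h2]
    have : Rhat N q j i k l = kron i k * kron j l := by
      simp [Rhat, kron, if_neg h3, if_neg h2]
      split_ifs <;> simp
    rw [this]; simp [kron]; ring
  · subst h
    simp only [kron_self, lt_irrefl, if_neg (lt_irrefl i)]
    have : Rhat N q i i k l = q * kron i k * kron i l := by
      simp [Rhat, kron]
    rw [this]
    have hqq : q * q⁻¹ = 1 := mul_inv_cancel₀ hq
    have : q * (q * kron i k * kron i l) - (q - q⁻¹) * (q * kron i k * kron i l)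
        = kron i k * kron i l := by
      have : q - (q - q⁻¹) = q⁻¹ := by ring
      calc q * (q * kron i k * kron i l) - (q - q⁻¹) * (q * kron i k * kron i l)
          = (q * q⁻¹) * (kron i k * kron i l) := by ring
        _ = kron i k * kron i l := by rw [hqq]; ring
    simp only [lt_irrefl, if_false]
    linear_combination this
  · have h1 : j ≠ i := ne_of_lt h
    have h2 : ¬ i < j := not_lt.2 h.le
    have h3 : i ≠ j := h1.symm
    simp only [kron, if_neg h3, if_neg h2, if_neg h1]
    have e1 : Rhat N q j i k l = kron j l * kron i k
        + (q - q⁻¹) * kron j k * kron i l := by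
      simp only [Rhat, kron, if_neg h1, if_pos h]
      split_ifs <;> simp
    have e2 : Rhat N q i j k l = kron i l * kron j k := by
      simp only [Rhat, kron, if_neg h3, if_neg h2]
      split_ifs <;> simp
    rw [e1, e2]
    simp only [kron]
    ring

/-! ### Matrix form of the Hecke relation -/

/-- R̂ as a matrix on pairs. -/
noncomputable def RM (N : ℕ) (q : ℂ) : Matrix (Fin N × Fin N) (Fin N × Fin N) ℂ :=
  Matrix.of fun r c => Rhat N q r.1 r.2 c.1 c.2

noncomputable def RIM (N : ℕ) (q : ℂ) : Matrix (Fin N × Fin N) (Fin N × Fin N) ℂ :=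
  Matrix.of fun r c => Rinv N q r.1 r.2 c.1 c.2

lemma one_apply_pair {N : ℕ} (r c : Fin N × Fin N) :
    (1 : Matrix (Fin N × Fin N) (Fin N × Fin N) ℂ) r c = kron r.1 c.1 * kron r.2 c.2 := by
  rcases r with ⟨a, b⟩; rcases c with ⟨d, e⟩
  by_cases h1 : a = d <;> by_cases h2 : b = e <;>
    simp [Matrix.one_apply, kron, Prod.ext_iff, h1, h2]

lemma RM_hecke {N : ℕ} {q : ℂ} (hq : q ≠ 0) :
    RM N q * RM N q = (q - q⁻¹) • RM N q + 1 := by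
  ext r c
  rw [Matrix.mul_apply, Fintype.sum_prod_type]
  simp only [RM, Matrix.of_apply]
  rw [hecke_ent hq]
  simp [Matrix.add_apply, Matrix.smul_apply, one_apply_pair, smul_eq_mul]

lemma RIM_eq {N : ℕ} {q : ℂ} : RIM N q = RM N q - (q - q⁻¹) • 1 := by
  ext r c
  simp [RIM, RM, Rinv, one_apply_pair, smul_eq_mul]
  ring

lemma RIM_hecke {N : ℕ} {q : ℂ} (hq : q ≠ 0) :
    RIM N q * RIM N q = (-(q - q⁻¹)) • RIM N q + 1 := by
  rw [RIM_eq]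
  simp only [sub_mul, mul_sub, RM_hecke hq, Matrix.smul_mul, Matrix.mul_smul,
    one_mul, mul_one, smul_smul]
  module

lemma heckeInv_ent {N : ℕ} {q : ℂ} (hq : q ≠ 0) (i j k l : Fin N) :
    ∑ a : Fin N, ∑ b : Fin N, Rinv N q i j a b * Rinv N q a b k l
      = (-(q - q⁻¹)) * Rinv N q i j k l + kron i k * kron j l := by
  have h := congrFun (congrFun (RIM_hecke (N := N) hq) (i, j)) (k, l)
  rw [Matrix.mul_apply, Fintype.sum_prod_type] at h
  simp only [RIM, Matrix.of_apply, Matrix.add_apply, Matrix.smul_apply,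
    one_apply_pair, smul_eq_mul] at h
  simpa using h
lemma Phi {q : ℂ} (hq : q ≠ 0) (K : ℕ) : ∀ m : ℕ,
    q * q ^ (2*((K:ℤ) - m)) *
        (q * (if m = K then (1:ℂ) else 0) + (q - q⁻¹) * ((if m < K then (1:ℂ) else 0) - 1))
      + (q - q⁻¹) * ∑ t ∈ Finset.range m, q ^ (2*((K:ℤ) - t)) *
        (q * (if t = K then (1:ℂ) else 0) + (q - q⁻¹) * ((if t < K then (1:ℂ) else 0) - 1))
      = (if m = K then 1 else 0) := by
  have hqinv : q * q⁻¹ = 1 := mul_inv_cancel₀ hq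
  intro m
  induction m with
  | zero =>
    simp only [Finset.range_zero, Finset.sum_empty, Nat.cast_zero, sub_zero, mul_zero, add_zero]
    by_cases h : 0 = K
    · subst h
      simp only [if_pos rfl, lt_irrefl, if_neg (lt_irrefl 0), if_true, if_false]
      simp only [Nat.cast_zero, mul_zero, zpow_zero, mul_one]
      linear_combination hqinv
    · have h2 : 0 < K := Nat.pos_of_ne_zero (fun hh => h hh.symm)
      simp [if_neg h, if_pos h2]
  | succ m ih =>
    rw [Finset.sum_range_succ]
    have hsplit : (2*((K:ℤ) - (m+1:ℕ))) = (2*((K:ℤ) - m)) + (-2) := by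
      push_cast; ring
    rw [hsplit, zpow_add₀ hq]
    set u := q ^ (2*((K:ℤ) - m)) with hu
    have hq2 : q ^ (-2 : ℤ) = q⁻¹ * q⁻¹ := by
      rw [show (-2 : ℤ) = (-1) + (-1) by norm_num, zpow_add₀ hq, zpow_neg_one]
    rw [hq2]
    rcases lt_trichotomy (m+1) K with h | h | h
    · have hm : m < K := Nat.lt_of_succ_lt h
      have hm1 : m ≠ K := Nat.ne_of_lt hm
      have hm2 : m + 1 ≠ K := Nat.ne_of_lt h
      simp only [if_neg hm1, if_pos hm, if_neg hm2, if_pos h] at ih ⊢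
      linear_combination ih
    · have hm : m < K := by omega
      have hm1 : m ≠ K := Nat.ne_of_lt hm
      have hKm : (2*((K:ℤ) - m)) = 1 + 1 := by omega
      have hu1 : u = q * q := by
        rw [hu, hKm, zpow_add₀ hq, zpow_one]
      simp only [if_neg hm1, if_pos hm, if_pos h, if_neg (by omega : ¬ m + 1 < K)] at ih ⊢
      rw [hu1]; rw [hu1] at ih
      linear_combination ih + ((q*q⁻¹)*(q*q⁻¹) + q*q⁻¹ + 1) * hqinv
    · have hm1 : ¬ m + 1 = K := by omega
      have hm2 : ¬ m + 1 < K := by omega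
      by_cases hmk : m = K
      · subst hmk
        have hu1 : u = 1 := by rw [hu]; simp
        simp only [if_pos rfl, if_neg hm1, if_neg hm2, if_neg (lt_irrefl m), if_true, if_false] at ih ⊢
        rw [hu1]; rw [hu1] at ih
        linear_combination ih - ((q - q⁻¹)*q⁻¹ + 1) * hqinv
      · have hmk2 : ¬ m < K := by omega
        simp only [if_neg hmk, if_neg hmk2, if_neg hm1, if_neg hm2] at ih ⊢
        linear_combination ih - (q - q⁻¹)*u*q⁻¹ * hqinv

lemma collapseStar {N : ℕ} (q : ℂ) (n r : Fin N) (W : Fin N → Fin N → ℂ) :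
    ∑ t : Fin N, ∑ y : Fin N, Rhat N q t n y r * W t y
      = q * kron n r * W n n + (1 - kron r n) * W r n
        + (q - q⁻¹) * kron n r * ∑ t : Fin N, (if t < n then 1 else 0) * W t t := by
  simp only [Rhat, add_mul, Finset.sum_add_distrib]
  congr 1
  · congr 1
    · -- first term
      simp [kron, ite_mul, mul_ite, Finset.sum_ite_eq, Finset.sum_ite_eq']
    · simp [kron, ite_mul, mul_ite, Finset.sum_ite_eq, Finset.sum_ite_eq']
  · rw [Finset.mul_sum]
    apply Finset.sum_congr rfl
    intro t _
    simp [kron, ite_mul, mul_ite, Finset.sum_ite_eq, Finset.sum_ite_eq']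
    split_ifs <;> rfl
lemma D_ne_zero {N : ℕ} {q : ℂ} (hq : q ≠ 0) (i : Fin N) : D N q i ≠ 0 :=
  zpow_ne_zero _ hq

lemma Dratio {N : ℕ} {q : ℂ} (hq : q ≠ 0) (k t : Fin N) :
    D N q k * (D N q t)⁻¹ = q ^ (2 * ((k.1 : ℤ) - t.1)) := by
  rw [D, D, ← zpow_neg, ← zpow_add₀ hq]
  congr 1
  ring

lemma Rinv_diag {N : ℕ} (q : ℂ) (t k j : Fin N) :
    Rinv N q t k t j
      = (q * kron t k + (q - q⁻¹) * ((if t < k then 1 else 0) - 1)) * kron k j := by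
  simp only [Rinv, Rhat, kron_self, kron]
  split_ifs <;> simp_all <;> ring

lemma Rinv_offdiag {N : ℕ} (q : ℂ) {n r : Fin N} (h : n ≠ r) (k j : Fin N) :
    Rinv N q n k r j = (1 - kron n k) * kron n j * kron k r := by
  simp only [Rinv, Rhat, kron]
  split_ifs <;> simp_all <;> ring

lemma sum_indicator_range {N : ℕ} (n : Fin N) (g : ℕ → ℂ) :
    ∑ t : Fin N, (if t < n then (1:ℂ) else 0) * g t.1
      = ∑ s ∈ Finset.range n.1, g s := by
  have h1 : ∀ t : Fin N, (if t < n then (1:ℂ) else 0) * g t.1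
      = if t.1 < n.1 then g t.1 else 0 := by
    intro t
    by_cases ht : t < n
    · rw [if_pos ht, if_pos (Fin.lt_def.1 ht), one_mul]
    · rw [if_neg ht, if_neg (fun hb => ht (Fin.lt_def.2 hb)), zero_mul]
  simp only [h1]
  rw [Fin.sum_univ_eq_sum_range (fun s => if s < n.1 then g s else 0) N]
  rw [← Finset.sum_subset (Finset.range_subset_range.2 n.isLt.le)]
  · apply Finset.sum_congr rfl
    intro s hs
    rw [if_pos (Finset.mem_range.1 hs)]
  · intro s _ hs
    rw [if_neg (fun hlt => hs (Finset.mem_range.2 hlt))]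

lemma star_ent {N : ℕ} {q : ℂ} (hq : q ≠ 0) (n r k j : Fin N) :
    ∑ t : Fin N, ∑ y : Fin N,
        D N q k * (D N q t)⁻¹ * Rhat N q t n y r * Rinv N q y k t j
      = kron n j * kron r k := by
  have hre : ∀ t y : Fin N, D N q k * (D N q t)⁻¹ * Rhat N q t n y r * Rinv N q y k t j
      = Rhat N q t n y r * (D N q k * (D N q t)⁻¹ * Rinv N q y k t j) := by
    intro t y; ring
  simp only [hre]
  rw [collapseStar]
  by_cases hrn : r = n
  · subst hrn
    simp only [kron_self, mul_one, one_mul, sub_self, zero_mul, add_zero, zero_add]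
    by_cases hkj : k = j
    · subst hkj
      have kron_sq : kron r k * kron r k = kron r k := by
        simp only [kron]; split_ifs <;> ring
      rw [kron_sq]
      have hsummand : ∀ t : Fin N, (if t < r then (1:ℂ) else 0) *
          (D N q k * (D N q t)⁻¹ * Rinv N q t k t k)
          = (if t < r then (1:ℂ) else 0) *
            (q ^ (2 * ((k.1 : ℤ) - t.1)) *
              (q * (if t.1 = k.1 then (1:ℂ) else 0)
                + (q - q⁻¹) * ((if t.1 < k.1 then (1:ℂ) else 0) - 1))) := by
        intro t
        rw [Rinv_diag, kron_self, mul_one, Dratio hq]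
        have ea : kron t k = (if (t:ℕ) = (k:ℕ) then (1:ℂ) else 0) := by
          simp only [kron, Fin.ext_iff]
        have eb : (if t < k then (1:ℂ) else 0) = (if t.1 < k.1 then (1:ℂ) else 0) := by
          by_cases h : t < k
          · rw [if_pos h, if_pos (Fin.lt_def.1 h)]
          · rw [if_neg h, if_neg (fun hb => h (Fin.lt_def.2 hb))]
        rw [ea, eb]
      simp only [hsummand]
      rw [sum_indicator_range r (fun s => q ^ (2 * ((k.1 : ℤ) - s)) *
            (q * (if s = k.1 then (1:ℂ) else 0)
              + (q - q⁻¹) * ((if s < k.1 then (1:ℂ) else 0) - 1)))]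
      rw [Rinv_diag, kron_self, mul_one, Dratio hq]
      have e1 : kron r k = (if r.1 = k.1 then (1:ℂ) else 0) := by
        simp only [kron, Fin.ext_iff]
      have e2 : (if r < k then (1:ℂ) else 0) = (if r.1 < k.1 then (1:ℂ) else 0) := by
        by_cases h : r < k
        · rw [if_pos h, if_pos (Fin.lt_def.1 h)]
        · rw [if_neg h, if_neg (fun hb => h (Fin.lt_def.2 hb))]
      rw [e1, e2]
      linear_combination Phi hq k.1 r.1
    · have hkj0 : kron k j = 0 := by simp only [kron, if_neg hkj]
      have hz : ∀ t : Fin N, (if t < r then (1:ℂ) else 0) *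
          (D N q k * (D N q t)⁻¹ * Rinv N q t k t j) = 0 := by
        intro t
        rw [Rinv_diag, hkj0]
        ring
      simp only [hz, Finset.sum_const_zero, mul_zero, add_zero]
      rw [Rinv_diag, hkj0]
      have : kron r j * kron r k = 0 := by
        simp only [kron]
        split_ifs with h1 h2 <;> first | exact absurd (h2.symm.trans h1) hkj | ring
      rw [this]
      ring
  · have h1 : kron n r = 0 := by simp only [kron, if_neg (fun h : n = r => hrn h.symm)]
    have h2 : kron r n = 0 := by simp [kron, hrn]
    rw [h1, h2]
    rw [Rinv_offdiag q (fun h => hrn h.symm) k j]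
    by_cases hkr : k = r
    · subst hkr
      rw [mul_inv_cancel₀ (D_ne_zero hq k)]
      by_cases hnk : n = k <;> by_cases hnj : n = j <;>
        simp [kron, hnk, hnj] <;> simp_all <;> ring
    · have h3 : kron k r = 0 := by simp [kron, hkr]
      have h4 : kron r k = 0 := by simp only [kron, if_neg (fun h : r = k => hkr h.symm)]
      rw [h3, h4]
      ring

noncomputable def F1 (N : ℕ) (q : ℂ) :
    Matrix ((Fin N × Fin N) × (Fin N × Fin N)) ((Fin N × Fin N) × (Fin N × Fin N)) ℂ :=
  Matrix.of fun r c =>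
    kron r.1.1 c.1.1 * kron r.2.2 c.2.2 *
      (D N q c.2.1 * (D N q r.1.2)⁻¹ * Rinv N q r.2.1 c.2.1 r.1.2 c.1.2)

noncomputable def F4 (N : ℕ) (q : ℂ) :
    Matrix ((Fin N × Fin N) × (Fin N × Fin N)) ((Fin N × Fin N) × (Fin N × Fin N)) ℂ :=
  Matrix.of fun r c =>
    kron r.1.1 c.1.1 * kron r.2.2 c.2.2 * Rhat N q c.1.2 r.1.2 c.2.1 r.2.1

lemma one_apply_I {N : ℕ} (r c : (Fin N × Fin N) × (Fin N × Fin N)) :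
    (1 : Matrix ((Fin N × Fin N) × (Fin N × Fin N)) ((Fin N × Fin N) × (Fin N × Fin N)) ℂ) r c
      = kron r.1.1 c.1.1 * kron r.1.2 c.1.2 * kron r.2.1 c.2.1 * kron r.2.2 c.2.2 := by
  obtain ⟨⟨a,b⟩,⟨c1,d⟩⟩ := r
  obtain ⟨⟨e,f⟩,⟨g,h⟩⟩ := c
  simp only [Matrix.one_apply, kron, Prod.ext_iff]
  split_ifs <;> simp_all

lemma F4_mul_F1 {N : ℕ} {q : ℂ} (hq : q ≠ 0) : F4 N q * F1 N q = 1 := by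
  ext r c
  rw [Matrix.mul_apply]
  rw [Fintype.sum_prod_type]
  simp only [Fintype.sum_prod_type]
  simp only [F4, F1, Matrix.of_apply]
  -- sum over mid = ((A,t),(y,B))
  have step : ∀ (A t y B : Fin N),
      (kron r.1.1 A * kron r.2.2 B * Rhat N q t r.1.2 y r.2.1) *
        (kron A c.1.1 * kron B c.2.2 *
          (D N q c.2.1 * (D N q t)⁻¹ * Rinv N q y c.2.1 t c.1.2))
      = kron r.1.1 A * kron A c.1.1 * (kron r.2.2 B * kron B c.2.2 *
          (D N q c.2.1 * (D N q t)⁻¹ * Rhat N q t r.1.2 y r.2.1 * Rinv N q y c.2.1 t c.1.2)) := by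
    intro A t y B; ring
  simp only [step]
  simp only [kron, ite_mul, mul_ite, one_mul, zero_mul, mul_one, mul_zero]
  simp only [Finset.sum_ite_eq, Finset.sum_ite_eq', Finset.mem_univ, if_true,
    Finset.sum_ite_irrel, Finset.sum_const_zero]
  rw [star_ent hq r.1.2 r.2.1 c.2.1 c.1.2]
  rw [one_apply_I]
  simp only [kron]
  split_ifs <;> ring

lemma F1_mul_F4 {N : ℕ} {q : ℂ} (hq : q ≠ 0) : F1 N q * F4 N q = 1 :=
  mul_eq_one_comm.mp (F4_mul_F1 hq)

noncomputable def F2 (N : ℕ) (q : ℂ) :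
    Matrix ((Fin N × Fin N) × (Fin N × Fin N)) ((Fin N × Fin N) × (Fin N × Fin N)) ℂ :=
  Matrix.of fun r c =>
    kron r.2.1 c.2.1 * kron r.2.2 c.2.2 * Rinv N q c.1.2 c.1.1 r.1.2 r.1.1

noncomputable def F3 (N : ℕ) (q : ℂ) :
    Matrix ((Fin N × Fin N) × (Fin N × Fin N)) ((Fin N × Fin N) × (Fin N × Fin N)) ℂ :=
  Matrix.of fun r c =>
    kron r.1.1 c.1.1 * kron r.1.2 c.1.2 * Rhat N q r.2.1 r.2.2 c.2.1 c.2.2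

lemma F3_mul_F2_apply {N : ℕ} (q : ℂ) (r c : (Fin N × Fin N) × (Fin N × Fin N)) :
    (F3 N q * F2 N q) r c
      = Rinv N q c.1.2 c.1.1 r.1.2 r.1.1 * Rhat N q r.2.1 r.2.2 c.2.1 c.2.2 := by
  rw [Matrix.mul_apply]
  simp only [Fintype.sum_prod_type]
  simp only [F3, F2, Matrix.of_apply]
  have step : ∀ (A B u v : Fin N),
      (kron r.1.1 A * kron r.1.2 B * Rhat N q r.2.1 r.2.2 u v) *
        (kron u c.2.1 * kron v c.2.2 * Rinv N q c.1.2 c.1.1 B A)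
      = kron r.1.1 A * (kron r.1.2 B * (kron u c.2.1 * (kron v c.2.2 *
          (Rinv N q c.1.2 c.1.1 B A * Rhat N q r.2.1 r.2.2 u v)))) := by
    intro A B u v; ring
  simp only [step]
  simp only [kron, ite_mul, mul_ite, one_mul, zero_mul, mul_one, mul_zero]
  simp only [Finset.sum_ite_eq, Finset.sum_ite_eq', Finset.mem_univ, if_true,
    Finset.sum_ite_irrel, Finset.sum_const_zero]

lemma F2_mul_F3_apply {N : ℕ} (q : ℂ) (r c : (Fin N × Fin N) × (Fin N × Fin N)) :
    (F2 N q * F3 N q) r c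
      = Rinv N q c.1.2 c.1.1 r.1.2 r.1.1 * Rhat N q r.2.1 r.2.2 c.2.1 c.2.2 := by
  rw [Matrix.mul_apply]
  simp only [Fintype.sum_prod_type]
  simp only [F3, F2, Matrix.of_apply]
  have step : ∀ (A B u v : Fin N),
      (kron r.2.1 u * kron r.2.2 v * Rinv N q B A r.1.2 r.1.1) *
        (kron A c.1.1 * kron B c.1.2 * Rhat N q u v c.2.1 c.2.2)
      = kron A c.1.1 * (kron B c.1.2 * (kron r.2.1 u * (kron r.2.2 v *
          (Rinv N q B A r.1.2 r.1.1 * Rhat N q u v c.2.1 c.2.2)))) := by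
    intro A B u v; ring
  simp only [step]
  simp only [kron, ite_mul, mul_ite, one_mul, zero_mul, mul_one, mul_zero]
  simp only [Finset.sum_ite_eq, Finset.sum_ite_eq', Finset.mem_univ, if_true,
    Finset.sum_ite_irrel, Finset.sum_const_zero]

lemma F3_comm_F2 {N : ℕ} (q : ℂ) : F3 N q * F2 N q = F2 N q * F3 N q := by
  ext r c
  rw [F3_mul_F2_apply, F2_mul_F3_apply]

lemma F3_hecke {N : ℕ} {q : ℂ} (hq : q ≠ 0) :
    F3 N q * F3 N q = (q - q⁻¹) • F3 N q + 1 := by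
  ext r c
  rw [Matrix.mul_apply]
  simp only [Fintype.sum_prod_type]
  simp only [F3, Matrix.of_apply]
  have step : ∀ (A B u v : Fin N),
      (kron r.1.1 A * kron r.1.2 B * Rhat N q r.2.1 r.2.2 u v) *
        (kron A c.1.1 * kron B c.1.2 * Rhat N q u v c.2.1 c.2.2)
      = kron r.1.1 A * kron A c.1.1 * (kron r.1.2 B * kron B c.1.2 *
          (Rhat N q r.2.1 r.2.2 u v * Rhat N q u v c.2.1 c.2.2)) := by
    intro A B u v; ring
  simp only [step]
  simp only [kron, ite_mul, mul_ite, one_mul, zero_mul, mul_one, mul_zero]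
  simp only [Finset.sum_ite_eq, Finset.sum_ite_eq', Finset.mem_univ, if_true,
    Finset.sum_ite_irrel, Finset.sum_const_zero]
  rw [hecke_ent hq]
  simp only [Matrix.add_apply, Matrix.smul_apply, smul_eq_mul, one_apply_I, F3,
    Matrix.of_apply, kron]
  clear step
  split_ifs <;> first | ring1 | (exfalso; simp_all)

lemma F2_hecke {N : ℕ} {q : ℂ} (hq : q ≠ 0) :
    F2 N q * F2 N q = (-(q - q⁻¹)) • F2 N q + 1 := by
  ext r c
  rw [Matrix.mul_apply]
  simp only [Fintype.sum_prod_type]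
  simp only [F2, Matrix.of_apply]
  have step : ∀ (A B u v : Fin N),
      (kron r.2.1 u * kron r.2.2 v * Rinv N q B A r.1.2 r.1.1) *
        (kron u c.2.1 * kron v c.2.2 * Rinv N q c.1.2 c.1.1 B A)
      = kron r.2.1 u * kron u c.2.1 * (kron r.2.2 v * kron v c.2.2 *
          (Rinv N q c.1.2 c.1.1 B A * Rinv N q B A r.1.2 r.1.1)) := by
    intro A B u v; ring
  simp only [step]
  simp only [kron, ite_mul, mul_ite, one_mul, zero_mul, mul_one, mul_zero]
  simp only [Finset.sum_ite_eq, Finset.sum_ite_eq', Finset.mem_univ, if_true,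
    Finset.sum_ite_irrel, Finset.sum_const_zero]
  rw [Finset.sum_comm]
  rw [heckeInv_ent hq]
  simp only [Matrix.add_apply, Matrix.smul_apply, smul_eq_mul, one_apply_I, F2,
    Matrix.of_apply, kron]
  clear step
  split_ifs <;> first | ring1 | (exfalso; simp_all)


lemma F4G_apply {N : ℕ} (q : ℂ) (r c2 : (Fin N × Fin N) × (Fin N × Fin N)) :
    (F4 N q * (F3 N q * F2 N q)) r c2
      = ∑ t : Fin N, ∑ y : Fin N,
          Rhat N q t r.1.2 y r.2.1 * Rinv N q c2.1.2 c2.1.1 t r.1.1 *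
            Rhat N q y r.2.2 c2.2.1 c2.2.2 := by
  rw [Matrix.mul_apply]
  simp only [Fintype.sum_prod_type]
  simp only [F4, Matrix.of_apply, F3_mul_F2_apply]
  have step : ∀ (A t y B : Fin N),
      (kron r.1.1 A * kron r.2.2 B * Rhat N q t r.1.2 y r.2.1) *
        (Rinv N q c2.1.2 c2.1.1 t A * Rhat N q y B c2.2.1 c2.2.2)
      = kron r.1.1 A * (kron r.2.2 B *
          (Rhat N q t r.1.2 y r.2.1 * Rinv N q c2.1.2 c2.1.1 t A *
            Rhat N q y B c2.2.1 c2.2.2)) := by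
    intro A t y B; ring
  simp only [step]
  simp only [kron, ite_mul, mul_ite, one_mul, zero_mul, mul_one, mul_zero]
  simp only [Finset.sum_ite_eq, Finset.sum_ite_eq', Finset.mem_univ, if_true,
    Finset.sum_ite_irrel, Finset.sum_const_zero]

lemma sigma_eq {N : ℕ} (q : ℂ) :
    sigmaPlus N q = F4 N q * (F3 N q * F2 N q) * F1 N q := by
  ext r c
  rw [Matrix.mul_apply]
  simp only [Fintype.sum_prod_type]
  simp only [F1, Matrix.of_apply, F4G_apply]
  have step : ∀ (A x p B : Fin N),
      (∑ t : Fin N, ∑ y : Fin N,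
          Rhat N q t r.1.2 y r.2.1 * Rinv N q x A t r.1.1 * Rhat N q y r.2.2 p B) *
        (kron A c.1.1 * kron B c.2.2 *
          (D N q c.2.1 * (D N q x)⁻¹ * Rinv N q p c.2.1 x c.1.2))
      = kron A c.1.1 * (kron B c.2.2 *
          ((∑ t : Fin N, ∑ y : Fin N,
            Rhat N q t r.1.2 y r.2.1 * Rinv N q x A t r.1.1 * Rhat N q y r.2.2 p B) *
          (D N q c.2.1 * (D N q x)⁻¹ * Rinv N q p c.2.1 x c.1.2))) := by
    intro A x p B; ring
  simp only [step]
  simp only [kron, ite_mul, mul_ite, one_mul, zero_mul, mul_one, mul_zero]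
  simp only [Finset.sum_ite_eq, Finset.sum_ite_eq', Finset.mem_univ, if_true,
    Finset.sum_ite_irrel, Finset.sum_const_zero]
  simp only [sigmaPlus, Matrix.of_apply]
  apply Finset.sum_congr rfl; intro x _
  apply Finset.sum_congr rfl; intro p _
  rw [Finset.sum_mul]
  apply Finset.sum_congr rfl; intro t _
  rw [Finset.sum_mul]
  apply Finset.sum_congr rfl; intro y _
  ring


/-- The braiding `σ` of `Γ_{+,z}` on `SL_q(N)` satisfies the cubic relation
`(σ − id)(σ + q^{−2} id)(σ + q^{2} id) = 0`. -/
theorem sigmaPlus_cubic_relation (N : ℕ) (hN : 2 ≤ N) (q : ℂ) (hq : q ≠ 0) :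
    (sigmaPlus N q - 1) * (sigmaPlus N q + q ^ (-2 : ℤ) • 1) *
      (sigmaPlus N q + q ^ (2 : ℕ) • 1) = 0 := by
  have hqinv : q * q⁻¹ = 1 := mul_inv_cancel₀ hq
  set Q : ℂ := q - q⁻¹ with hQdef
  set x := F3 N q with hxdef
  set y := F2 N q with hydef
  set C := x * y with hC
  have hx : x * x = Q • x + 1 := F3_hecke hq
  have hy : y * y = (-Q) • y + 1 := F2_hecke hq
  have hxy : x * y = y * x := F3_comm_F2 q
  have h41 : F4 N q * F1 N q = 1 := F4_mul_F1 hq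
  have h14 : F1 N q * F4 N q = 1 := F1_mul_F4 hq
  have hsig : sigmaPlus N q = F4 N q * C * F1 N q := sigma_eq q
  have ea : (q:ℂ) ^ (-2 : ℤ) = q⁻¹ * q⁻¹ := by
    rw [show (-2 : ℤ) = (-1) + (-1) by norm_num, zpow_add₀ hq, zpow_neg_one]
  have eb : (q:ℂ) ^ (2 : ℕ) = q * q := by rw [pow_two]
  rw [ea, eb]
  have key : ∀ aa : ℂ, sigmaPlus N q + aa • 1 = F4 N q * (C + aa • 1) * F1 N q := by
    intro aa
    rw [hsig, Matrix.mul_add, Matrix.add_mul]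
    congr 1
    rw [mul_smul_comm, mul_one, smul_mul_assoc, h41]
  have keysub : sigmaPlus N q - 1 = F4 N q * (C - 1) * F1 N q := by
    rw [hsig, Matrix.mul_sub, Matrix.sub_mul]
    congr 1
    rw [mul_one, h41]
  have hpair : ∀ M1 M2 : Matrix ((Fin N × Fin N) × (Fin N × Fin N))
      ((Fin N × Fin N) × (Fin N × Fin N)) ℂ,
      (F4 N q * M1 * F1 N q) * (F4 N q * M2 * F1 N q) = F4 N q * (M1 * M2) * F1 N q := by
    intro M1 M2
    simp only [Matrix.mul_assoc]
    rw [show F1 N q * (F4 N q * (M2 * F1 N q)) = M2 * F1 N q by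
      rw [← Matrix.mul_assoc, h14, one_mul]]
  rw [keysub, key (q⁻¹ * q⁻¹), key (q * q), hpair, hpair]
  suffices hcube : (C - 1) * (C + (q⁻¹ * q⁻¹) • 1) * (C + (q * q) • 1) = 0 by
    rw [hcube]
    simp
  have hxC : x * C = Q • C + y := by
    rw [hC, ← Matrix.mul_assoc, hx, Matrix.add_mul, Matrix.smul_mul, one_mul]
  have hyC : y * C = (-Q) • C + x := by
    rw [hC, ← Matrix.mul_assoc, ← hxy, Matrix.mul_assoc, hy, Matrix.mul_add,
      mul_smul_comm, mul_one]
  have hC2 : C * C = (-(Q*Q)) • C + Q • x - Q • y + 1 := by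
    calc C * C = x * (y * C) := by rw [hC, Matrix.mul_assoc]
      _ = x * ((-Q) • C + x) := by rw [hyC]
      _ = (-Q) • (x * C) + x * x := by rw [Matrix.mul_add, Matrix.mul_smul]
      _ = (-Q) • (Q • C + y) + (Q • x + 1) := by rw [hxC, hx]
      _ = (-(Q*Q)) • C + Q • x - Q • y + 1 := by module
  have hC3 : C * C * C = (-(Q*Q+1)) • (C*C) + ((Q*Q)+1) • C + 1 := by
    have e1 : C * C * C = (-(Q*Q)) • (C*C) + (2*(Q*Q)+1) • C + Q • y - Q • x := by
      calc C * C * C = ((-(Q*Q)) • C + Q • x - Q • y + 1) * C := by rw [hC2]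
        _ = (-(Q*Q)) • (C*C) + Q • (x*C) - Q • (y*C) + C := by
            simp only [Matrix.add_mul, Matrix.sub_mul, Matrix.smul_mul, one_mul]
        _ = (-(Q*Q)) • (C*C) + Q • (Q • C + y) - Q • ((-Q) • C + x) + C := by
            rw [hxC, hyC]
        _ = (-(Q*Q)) • (C*C) + (2*(Q*Q)+1) • C + Q • y - Q • x := by module
    have e2 : Q • x - Q • y = C*C + (Q*Q) • C - 1 := by rw [hC2]; module
    calc C * C * C = (-(Q*Q)) • (C*C) + (2*(Q*Q)+1) • C - (Q • x - Q • y) := by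
          rw [e1]; module
      _ = (-(Q*Q)) • (C*C) + (2*(Q*Q)+1) • C - (C*C + (Q*Q) • C - 1) := by rw [e2]
      _ = (-(Q*Q+1)) • (C*C) + ((Q*Q)+1) • C + 1 := by module
  have expand : (C - 1) * (C + (q⁻¹*q⁻¹) • 1) * (C + (q*q) • 1)
      = C*C*C + (q⁻¹*q⁻¹ + q*q - 1) • (C*C)
        + ((q⁻¹*q⁻¹)*(q*q) - q⁻¹*q⁻¹ - q*q) • C
        - ((q⁻¹*q⁻¹)*(q*q)) • (1 : Matrix ((Fin N × Fin N) × (Fin N × Fin N))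
            ((Fin N × Fin N) × (Fin N × Fin N)) ℂ) := by
    simp only [Matrix.sub_mul, Matrix.mul_add, Matrix.add_mul, mul_smul_comm,
      smul_mul_assoc, mul_one, one_mul, smul_smul]
    module
  rw [expand, hC3]
  have h1' : q⁻¹*q⁻¹ + q*q - 1 = Q*Q + 1 := by
    rw [hQdef]; linear_combination 2*hqinv
  have h2' : (q⁻¹*q⁻¹)*(q*q) - q⁻¹*q⁻¹ - q*q = -((Q*Q)+1) := by
    rw [hQdef]; linear_combination (q*q⁻¹ - 1)*hqinv
  have h3' : (q⁻¹*q⁻¹)*(q*q) = 1 := by linear_combination (q*q⁻¹ + 1)*hqinv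
  rw [h1', h2', h3']
  module

end Stmt0
end

section
/- Let N ≥ 2 be an integer, q ∈ ℂ with q ≠ 0, and α, β ∈ ℂ. The invariant-metric matrix G(α,β), with entries G_{(ij),(kl)} = q^{2j} α δ_{il} δ_{jk} + β δ_{ij} δ_{kl}, is invertible (i.e. the corresponding bilinear map is nondegenerate) if and only if α ≠ 0 and α + 𝔰β ≠ 0. -/
/-!
Write `G(α,β) = α • D P + β e eᵀ`, where `P` is the permutation matrix of `(i,j) ↦ (j,i)`,
`D` is diagonal with entries `q^{2j}`, and `e = (δ_{ij})`. For `α = 0` the matrix has rank one,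
hence is singular once `N² ≥ 2`. For `α ≠ 0` the matrix determinant lemma gives
`det G = det (α • D P) · (1 + eᵀ (α • D P)⁻¹ (β e))`, and `(D P)⁻¹ e = (q^{-2i} δ_{ij})`,
whose pairing with `e` is `𝔰`; so `det G` vanishes exactly when `α + 𝔰β = 0`.
-/

open scoped BigOperators

namespace Stmt2

/-- Kronecker delta with values in `ℂ`. -/
noncomputable def kron {N : ℕ} (i j : Fin N) : ℂ := if i = j then 1 else 0

/-- `𝔰 = Σ_{i=1}^{N} q^{−2i}`. -/
noncomputable def sconst (N : ℕ) (q : ℂ) : ℂ := ∑ i : Fin N, q ^ (-(2 * ((i.1 : ℤ) + 1)))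

/-- The invariant-metric matrix `G(α,β)` with entries
`G_{(ij),(kl)} = q^{2j} α δ_{il} δ_{jk} + β δ_{ij} δ_{kl}` (indices `1,…,N`). -/
noncomputable def G (N : ℕ) (q α β : ℂ) : Matrix (Fin N × Fin N) (Fin N × Fin N) ℂ :=
  Matrix.of fun r c =>
    q ^ (2 * ((r.2.1 : ℤ) + 1)) * α * kron r.1 c.2 * kron r.2 c.1
      + β * kron r.1 r.2 * kron c.1 c.2

end Stmt2

open Matrix

theorem Matrix.det_add_vecMulVec_of_mulVec_eq {m R : Type*} [Fintype m] [DecidableEq m]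
    [CommRing R] {A : Matrix m m R} (hA : IsUnit A.det) {u v w : m → R} (hw : A *ᵥ w = u) :
    (A + vecMulVec u v).det = A.det * (1 + v ⬝ᵥ w) := by
  have hinv : A⁻¹ *ᵥ u = w := by
    rw [← hw, mulVec_mulVec, nonsing_inv_mul A hA, one_mulVec]
  rw [vecMulVec_eq Unit, det_add_replicateCol_mul_replicateRow hA, Matrix.mul_assoc,
    ← replicateCol_mulVec, hinv, det_unique (1 + _)]
  rfl

namespace Stmt2

noncomputable def qFlip (N : ℕ) (q : ℂ) : Matrix (Fin N × Fin N) (Fin N × Fin N) ℂ :=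
  diagonal (fun p => q ^ (2 * ((p.2.1 : ℤ) + 1))) *
    Equiv.Perm.permMatrix ℂ (Equiv.prodComm (Fin N) (Fin N))

noncomputable def diagVec (N : ℕ) : Fin N × Fin N → ℂ := fun p => kron p.1 p.2

theorem G_eq_smul_qFlip_add_vecMulVec (N : ℕ) (q α β : ℂ) :
    G N q α β = α • qFlip N q + vecMulVec (β • diagVec N) (diagVec N) := by
  ext ⟨i, j⟩ ⟨k, l⟩
  simp [G, qFlip, diagVec, PEquiv.toMatrix_apply, vecMulVec_apply, kron, Prod.ext_iff, and_comm,
    ite_and, mul_comm]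

theorem isUnit_det_qFlip (N : ℕ) {q : ℂ} (hq : q ≠ 0) : IsUnit (qFlip N q).det := by
  rw [qFlip, det_mul, det_diagonal, det_permutation, isUnit_iff_ne_zero]
  exact mul_ne_zero (Finset.prod_ne_zero_iff.2 fun p _ => zpow_ne_zero _ hq) (by simp)

noncomputable def qDiagVec (N : ℕ) (q : ℂ) : Fin N × Fin N → ℂ :=
  fun p => q ^ (-(2 * ((p.1.1 : ℤ) + 1))) * kron p.1 p.2

theorem qFlip_mulVec_qDiagVec (N : ℕ) {q : ℂ} (hq : q ≠ 0) :
    qFlip N q *ᵥ qDiagVec N q = diagVec N := by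
  ext ⟨i, j⟩
  rw [qFlip, ← mulVec_mulVec, PEquiv.toMatrix_toPEquiv_mulVec, mulVec_diagonal]
  simp [qDiagVec, diagVec, kron, eq_comm, mul_inv_cancel₀ (zpow_ne_zero _ hq)]

theorem diagVec_dotProduct_qDiagVec (N : ℕ) (q : ℂ) :
    diagVec N ⬝ᵥ qDiagVec N q = sconst N q := by
  simp [dotProduct, Fintype.sum_prod_type, diagVec, qDiagVec, kron, sconst]

theorem det_G_of_ne_zero (N : ℕ) {q : ℂ} (hq : q ≠ 0) {α : ℂ} (hα : α ≠ 0) (β : ℂ) :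
    (G N q α β).det = α ^ Fintype.card (Fin N × Fin N) * (qFlip N q).det *
      (1 + sconst N q * β / α) := by
  rw [G_eq_smul_qFlip_add_vecMulVec, det_add_vecMulVec_of_mulVec_eq (w := (β / α) • qDiagVec N q),
    det_smul, dotProduct_smul, diagVec_dotProduct_qDiagVec, smul_eq_mul]
  · ring
  · rw [det_smul]
    exact ((Ne.isUnit hα).pow _).mul (isUnit_det_qFlip N hq)
  · rw [smul_mulVec, mulVec_smul, qFlip_mulVec_qDiagVec N hq, smul_smul, mul_div_cancel₀ β hα]

/-- `G(α,β)` is invertible if and only if `α ≠ 0` and `α + 𝔰β ≠ 0`. -/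
theorem G_isUnit_iff (N : ℕ) (hN : 2 ≤ N) (q : ℂ) (hq : q ≠ 0) (α β : ℂ) :
    IsUnit (G N q α β) ↔ α ≠ 0 ∧ α + sconst N q * β ≠ 0 := by
  rw [isUnit_iff_isUnit_det, isUnit_iff_ne_zero]
  rcases eq_or_ne α 0 with rfl | hα
  · have : Nontrivial (Fin N) := Fin.nontrivial_iff_two_le.2 hN
    rw [G_eq_smul_qFlip_add_vecMulVec, zero_smul, zero_add, det_vecMulVec]
    simp
  · rw [det_G_of_ne_zero N hq hα, one_add_div hα]
    simp [hα, (isUnit_det_qFlip N hq).ne_zero]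

end Stmt2
end

section
/- Let N ≥ 2 be an integer, q ∈ ℂ with q ≠ 0, and α, β ∈ ℂ with α ≠ 0 and α + 𝔰β ≠ 0. Let K(α,β) be the N² × N² matrix with entries K_{(ij),(kl)} = q^{−2i} α^{−1} δ_{il} δ_{jk} − (β/(α(α + 𝔰β))) q^{−2i−2k} δ_{ij} δ_{kl}. Then G(α,β)·K(α,β) = K(α,β)·G(α,β) = I, i.e. K(α,β) is the matrix of the dual metric g* of the invariant metric with parameters (α,β). -/
open scoped BigOperators

namespace Stmt3

/-- Kronecker delta with values in `ℂ`. -/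
noncomputable def kron {N : ℕ} (i j : Fin N) : ℂ := if i = j then 1 else 0

/-- `𝔰 = Σ_{i=1}^{N} q^{−2i}`. -/
noncomputable def sconst (N : ℕ) (q : ℂ) : ℂ := ∑ i : Fin N, q ^ (-(2 * ((i.1 : ℤ) + 1)))

/-- The invariant-metric matrix `G(α,β)` with entries
`G_{(ij),(kl)} = q^{2j} α δ_{il} δ_{jk} + β δ_{ij} δ_{kl}` (indices `1,…,N`). -/
noncomputable def G (N : ℕ) (q α β : ℂ) : Matrix (Fin N × Fin N) (Fin N × Fin N) ℂ :=
  Matrix.of fun r c =>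
    q ^ (2 * ((r.2.1 : ℤ) + 1)) * α * kron r.1 c.2 * kron r.2 c.1
      + β * kron r.1 r.2 * kron c.1 c.2

/-- The dual-metric matrix `K(α,β)` with entries
`K_{(ij),(kl)} = q^{−2i} α⁻¹ δ_{il} δ_{jk} − (β/(α(α + 𝔰β))) q^{−2i−2k} δ_{ij} δ_{kl}`. -/
noncomputable def K (N : ℕ) (q α β : ℂ) : Matrix (Fin N × Fin N) (Fin N × Fin N) ℂ :=
  Matrix.of fun r c =>
    q ^ (-(2 * ((r.1.1 : ℤ) + 1))) * α⁻¹ * kron r.1 c.2 * kron r.2 c.1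
      - (β / (α * (α + sconst N q * β))) *
          q ^ (-(2 * ((r.1.1 : ℤ) + 1)) - 2 * ((c.1.1 : ℤ) + 1)) *
          kron r.1 r.2 * kron c.1 c.2

end Stmt3

/-!
Write `e` for the identity matrix flattened to a vector indexed by `Fin N × Fin N` and `P` for the
permutation matrix of the flip `(i, j) ↦ (j, i)`. Then `G = α diag(q^{2j}) P + β e eᵀ`, and since
conjugation by `P` turns `diag(q^{2j})` into `diag(q^{2i})`, the first summand `A` has inverse
`α⁻¹ diag(q^{-2i}) P`. The matrix `K` is exactly the Sherman–Morrison formula for the inverse of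
the rank-one update `A + β e eᵀ`, whose denominator is `1 + β eᵀ A⁻¹ e = α⁻¹ (α + 𝔰 β)`.
A one-sided inverse of a square matrix is two-sided.
-/

open Matrix

namespace Matrix

section ShermanMorrison

variable {m R : Type*} [Fintype m] [DecidableEq m] [Field R]

theorem add_vecMulVec_mul_shermanMorrison_eq_one {A A' : Matrix m m R} (hA : A * A' = 1)
    (u v : m → R) (h : 1 + v ⬝ᵥ (A' *ᵥ u) ≠ 0) :
    (A + vecMulVec u v) *
      (A' - (1 + v ⬝ᵥ (A' *ᵥ u))⁻¹ • vecMulVec (A' *ᵥ u) (v ᵥ* A')) = 1 := by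
  have hX : (A + vecMulVec u v) * vecMulVec (A' *ᵥ u) (v ᵥ* A') =
      (1 + v ⬝ᵥ (A' *ᵥ u)) • vecMulVec u (v ᵥ* A') := by
    rw [Matrix.add_mul, mul_vecMulVec, mulVec_mulVec, hA, one_mulVec,
      vecMulVec_mul_vecMulVec, vecMulVec_smul, add_smul, one_smul]
  rw [Matrix.mul_sub, Matrix.mul_smul, hX, smul_smul, inv_mul_cancel₀ h, one_smul,
    Matrix.add_mul, hA, vecMulVec_mul, add_sub_cancel_right]

end ShermanMorrison

section WeightedPerm

variable {ι R : Type*} [DecidableEq ι] [CommSemiring R]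

def weightedPerm (σ : Equiv.Perm ι) (f : ι → R) : Matrix ι ι R :=
  of fun r c => if c = σ r then f r else 0

theorem weightedPerm_refl (f : ι → R) : weightedPerm (Equiv.refl ι) f = diagonal f := by
  ext r c
  simp [weightedPerm, diagonal_apply, eq_comm]

variable [Fintype ι]

theorem weightedPerm_mul_weightedPerm (σ τ : Equiv.Perm ι) (f g : ι → R) :
    weightedPerm σ f * weightedPerm τ g = weightedPerm (σ.trans τ) fun r => f r * g (σ r) := by
  ext r c
  rw [mul_apply, Finset.sum_eq_single (σ r) (by simp_all [weightedPerm]) (by simp)]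
  by_cases h : c = τ (σ r) <;> simp [weightedPerm, h]

theorem weightedPerm_mulVec (σ : Equiv.Perm ι) (f u : ι → R) :
    weightedPerm σ f *ᵥ u = fun r => f r * u (σ r) := by
  ext r
  simp [weightedPerm, mulVec, dotProduct, ite_mul]

theorem vecMul_weightedPerm (σ : Equiv.Perm ι) (f u : ι → R) :
    u ᵥ* weightedPerm σ f = fun c => u (σ.symm c) * f (σ.symm c) := by
  ext c
  rw [vecMul, dotProduct, Finset.sum_eq_single (σ.symm c)
    (by simp_all [weightedPerm, Equiv.eq_symm_apply, eq_comm]) (by simp)]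
  simp [weightedPerm]

end WeightedPerm

end Matrix

theorem inv_one_add_mul_inv_mul_mul_inv_mul_inv {K : Type*} [Field K] (α β s : K) :
    (1 + β * α⁻¹ * s)⁻¹ * α⁻¹ * β * α⁻¹ = β / (α * (α + s * β)) := by
  rcases eq_or_ne α 0 with rfl | hα
  · simp
  · field_simp

namespace Stmt3

noncomputable section

variable (N : ℕ) (q α β : ℂ)

def identityVec : Fin N × Fin N → ℂ := fun r => kron r.1 r.2

def weightedIdentityVec : Fin N × Fin N → ℂ :=
  fun r => q ^ (-(2 * ((r.1.1 : ℤ) + 1))) * kron r.1 r.2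

def metricFlip : Matrix (Fin N × Fin N) (Fin N × Fin N) ℂ :=
  weightedPerm (Equiv.prodComm _ _) fun r => α * q ^ (2 * ((r.2.1 : ℤ) + 1))

def dualFlip : Matrix (Fin N × Fin N) (Fin N × Fin N) ℂ :=
  weightedPerm (Equiv.prodComm _ _) fun r => α⁻¹ * q ^ (-(2 * ((r.1.1 : ℤ) + 1)))

theorem G_eq_metricFlip_add :
    G N q α β = metricFlip N q α + vecMulVec (β • identityVec N) (identityVec N) := by
  ext ⟨i, j⟩ ⟨k, l⟩
  simp only [G, metricFlip, weightedPerm, identityVec, kron, Matrix.add_apply, of_apply,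
    vecMulVec_apply, Pi.smul_apply, smul_eq_mul, Equiv.prodComm_apply, Prod.swap_prod_mk,
    Prod.mk.injEq]
  split_ifs <;> grind

theorem metricFlip_mul_dualFlip (hq : q ≠ 0) (hα : α ≠ 0) :
    metricFlip N q α * dualFlip N q α = 1 := by
  rw [metricFlip, dualFlip, weightedPerm_mul_weightedPerm,
    show (Equiv.prodComm (Fin N) (Fin N)).trans (Equiv.prodComm _ _) = Equiv.refl _ from
      Equiv.ext Prod.swap_swap, weightedPerm_refl, ← diagonal_one]
  congr 1
  ext r
  simp only [Equiv.prodComm_apply, Prod.fst_swap]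
  rw [mul_mul_mul_comm, mul_inv_cancel₀ hα, ← zpow_add₀ hq, add_neg_cancel, zpow_zero, one_mul]

theorem dualFlip_mulVec_identityVec :
    dualFlip N q α *ᵥ identityVec N = α⁻¹ • weightedIdentityVec N q := by
  ext ⟨i, j⟩
  simp [dualFlip, weightedPerm_mulVec, identityVec, weightedIdentityVec, kron, eq_comm]

theorem identityVec_vecMul_dualFlip :
    identityVec N ᵥ* dualFlip N q α = α⁻¹ • weightedIdentityVec N q := by
  ext ⟨i, j⟩
  simp only [dualFlip, vecMul_weightedPerm, identityVec, weightedIdentityVec, kron,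
    Equiv.prodComm_symm, Equiv.prodComm_apply, Prod.swap_prod_mk, Pi.smul_apply, smul_eq_mul]
  split_ifs with h <;> simp_all [eq_comm]

theorem identityVec_dotProduct_dualFlip_mulVec :
    identityVec N ⬝ᵥ (dualFlip N q α *ᵥ (β • identityVec N)) = β * (α⁻¹ * sconst N q) := by
  rw [mulVec_smul, dualFlip_mulVec_identityVec, dotProduct_smul, dotProduct_smul, smul_eq_mul,
    smul_eq_mul]
  congr 2
  simp [identityVec, weightedIdentityVec, dotProduct, kron, sconst, Fintype.sum_prod_type]

theorem K_eq_dualFlip_sub :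
    K N q α β = dualFlip N q α -
      (1 + identityVec N ⬝ᵥ (dualFlip N q α *ᵥ (β • identityVec N)))⁻¹ •
        vecMulVec (dualFlip N q α *ᵥ (β • identityVec N)) (identityVec N ᵥ* dualFlip N q α) := by
  rw [identityVec_dotProduct_dualFlip_mulVec, mulVec_smul, dualFlip_mulVec_identityVec,
    identityVec_vecMul_dualFlip]
  simp only [smul_vecMulVec, vecMulVec_smul, smul_smul, ← mul_assoc,
    inv_one_add_mul_inv_mul_mul_inv_mul_inv]
  ext ⟨i, j⟩ ⟨k, l⟩
  have hpow (a b : ℕ) : q ^ (-(2 * ((a : ℤ) + 1)) - 2 * ((b : ℤ) + 1)) =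
      q ^ (-(2 * ((a : ℤ) + 1))) * q ^ (-(2 * ((b : ℤ) + 1))) := by
    rw [sub_eq_add_neg, zpow_add' (Or.inr (Or.inl (by omega)))]
  simp only [K, dualFlip, weightedPerm, weightedIdentityVec, kron, hpow, Matrix.sub_apply,
    Matrix.smul_apply, of_apply, vecMulVec_apply, Equiv.prodComm_apply, Prod.swap_prod_mk,
    Prod.mk.injEq, smul_eq_mul]
  split_ifs <;> subst_vars <;> simp_all <;> ring

end

theorem K_is_dual_metric_general (N : ℕ) (q : ℂ) (hq : q ≠ 0) (α β : ℂ)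
    (hα : α ≠ 0) (hαβ : α + sconst N q * β ≠ 0) :
    G N q α β * K N q α β = 1 ∧ K N q α β * G N q α β = 1 := by
  have hGK : G N q α β * K N q α β = 1 := by
    rw [G_eq_metricFlip_add, K_eq_dualFlip_sub]
    refine add_vecMulVec_mul_shermanMorrison_eq_one (metricFlip_mul_dualFlip N q α hq hα) _ _ ?_
    rw [identityVec_dotProduct_dualFlip_mulVec,
      show 1 + β * (α⁻¹ * sconst N q) = α⁻¹ * (α + sconst N q * β) by field_simp]
    exact mul_ne_zero (inv_ne_zero hα) hαβ
  exact ⟨hGK, mul_eq_one_comm.mp hGK⟩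

/-- `K(α,β)` is the two-sided inverse of `G(α,β)`, i.e. the matrix of the dual metric `g*`. -/
theorem K_is_dual_metric (N : ℕ) (hN : 2 ≤ N) (q : ℂ) (hq : q ≠ 0) (α β : ℂ)
    (hα : α ≠ 0) (hαβ : α + sconst N q * β ≠ 0) :
    G N q α β * K N q α β = 1 ∧ K N q α β * G N q α β = 1 :=
  K_is_dual_metric_general N q hq α β hα hαβ

end Stmt3
end

section
/- Let N ≥ 2 be an integer and q ∈ ℂ with q ≠ 0. For all α, β ∈ ℂ and all indices i,j,k,l ∈ {1,…,N}, one has Σ_{m,n,r,s} σ^{mnrs}_{ijkl} G_{(mn),(rs)} = G_{(ij),(kl)}, where σ is the braiding matrix of the calculus Γ_{+,z} on SL_q(N) and G = G(α,β) is the invariant-metric matrix. Equivalently (Corollary 2.5 of the paper for Γ_{+,z}): every invariant metric g on Γ_{+,z} is symmetric with respect to the braiding, g∘σ = g. -/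
set_option maxRecDepth 8000
set_option maxHeartbeats 2000000


open scoped BigOperators

namespace Stmt4

/-- Kronecker delta with values in `ℂ`. -/
noncomputable def kron {N : ℕ} (i j : Fin N) : ℂ := if i = j then 1 else 0

/-- The standard R-matrix `R̂` of `SL_q(N)`: entry `R̂^{ij}_{kl}`. -/
noncomputable def Rhat (N : ℕ) (q : ℂ) (i j k l : Fin N) : ℂ :=
  q * kron i j * kron i k * kron j l
    + (1 - kron i j) * kron i l * kron j k
    + (q - q⁻¹) * (if i < j then 1 else 0) * kron i k * kron j l

/-- The inverse R-matrix: `R̂⁻¹ = R̂ − Q·id` with `Q = q − q⁻¹`. -/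
noncomputable def Rinv (N : ℕ) (q : ℂ) (i j k l : Fin N) : ℂ :=
  Rhat N q i j k l - (q - q⁻¹) * kron i k * kron j l

/-- `D_i = q^{2i}`. -/
noncomputable def D (N : ℕ) (q : ℂ) (i : Fin N) : ℂ := q ^ (2 * ((i.1 : ℤ) + 1))


lemma sum_kron_left {N : ℕ} (a : Fin N) (f : Fin N → ℂ) :
    ∑ t : Fin N, kron a t * f t = f a := by simp [kron, ite_mul]

lemma sum_kron_right {N : ℕ} (a : Fin N) (f : Fin N → ℂ) :
    ∑ t : Fin N, kron t a * f t = f a := by simp [kron, ite_mul]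

lemma sum_fin_ite {N : ℕ} (a b : ℕ) (hb : b ≤ N) (f : ℕ → ℂ) :
    ∑ n : Fin N, (if a ≤ n.1 ∧ n.1 < b then f n.1 else 0)
      = ∑ n ∈ Finset.Ico a b, f n := by
  rw [Fin.sum_univ_eq_sum_range (fun n => if a ≤ n ∧ n < b then f n else 0) N,
    ← Finset.sum_filter]
  congr 1
  ext x
  simp only [Finset.mem_filter, Finset.mem_range, Finset.mem_Ico]
  omega

lemma tel (g : ℕ → ℂ) (a b : ℕ) (h : a ≤ b) :
    ∑ n ∈ Finset.Ico a b, (g (n+1) - g n) = g b - g a := by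
  induction b, h using Nat.le_induction with
  | base => simp
  | succ b hb ih => rw [Finset.sum_Ico_succ_top (by omega), ih]; ring

lemma qstep (q : ℂ) (hq : q ≠ 0) (a : ℤ) : (q - q⁻¹) * q ^ (a+1) = q ^ (a+2) - q ^ a := by
  have h1 : q ^ (a+1) = q ^ a * q := zpow_add_one₀ hq a
  have h2 : q ^ (a+2) = q ^ a * q * q := by
    rw [show a+2 = (a+1)+1 by ring, zpow_add_one₀ hq, h1]
  rw [h1, h2]
  field_simp

lemma telq (q : ℂ) (hq : q ≠ 0) (c : ℤ) (a b : ℕ) (h : a ≤ b) :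
    ∑ n ∈ Finset.Ico a b, (q - q⁻¹) * q ^ (2*(n:ℤ)+c+1)
      = q ^ (2*(b:ℤ)+c) - q ^ (2*(a:ℤ)+c) := by
  induction b, h using Nat.le_induction with
  | base => simp
  | succ b hb ih =>
      rw [Finset.sum_Ico_succ_top (by omega), ih, qstep q hq (2*(b:ℤ)+c),
        show 2*((b+1:ℕ):ℤ)+c = 2*(b:ℤ)+c+2 by push_cast; ring]
      ring

lemma telqneg (q : ℂ) (hq : q ≠ 0) (c : ℤ) (a b : ℕ) (h : a ≤ b) :
    ∑ n ∈ Finset.Ico a b, (q - q⁻¹) * q ^ (c - 2*(n:ℤ) - 1)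
      = q ^ (c - 2*(a:ℤ)) - q ^ (c - 2*(b:ℤ)) := by
  induction b, h using Nat.le_induction with
  | base => simp
  | succ b hb ih =>
      have h1 := qstep q hq (c - 2*(b:ℤ) - 2)
      rw [show c - 2*(b:ℤ) - 2 + 1 = c - 2*(b:ℤ) - 1 by ring,
        show c - 2*(b:ℤ) - 2 + 2 = c - 2*(b:ℤ) by ring] at h1
      rw [Finset.sum_Ico_succ_top (by omega), ih, h1,
        show c - 2*((b+1:ℕ):ℤ) = c - 2*(b:ℤ) - 2 by push_cast; ring]
      ring

lemma key_collapse {N : ℕ} (q : ℂ) (a b : Fin N) (f : Fin N → Fin N → ℂ) :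
    ∑ t : Fin N, ∑ m : Fin N, Rinv N q a b t m * f t m
      = (q * kron a b + (q - q⁻¹) * ((if a < b then 1 else 0) - 1)) * f a b
        + (1 - kron a b) * f b a := by
  have h1 : ∀ t : Fin N, ∑ m : Fin N, Rinv N q a b t m * f t m
      = kron a t * ((q * kron a b + (q - q⁻¹) * ((if a < b then 1 else 0) - 1)) * f t b)
        + kron b t * ((1 - kron a b) * f t a) := by
    intro t
    have h2 : ∀ m : Fin N, Rinv N q a b t m * f t m
        = kron b m * (kron a t * ((q * kron a b + (q - q⁻¹) * ((if a < b then 1 else 0) - 1)) * f t m))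
          + kron a m * (kron b t * ((1 - kron a b) * f t m)) := by
      intro m
      simp only [Rinv, Rhat, kron]
      split_ifs <;> ring
    rw [Finset.sum_congr rfl (fun m _ => h2 m), Finset.sum_add_distrib,
      sum_kron_left b, sum_kron_left a]
  rw [Finset.sum_congr rfl (fun t _ => h1 t), Finset.sum_add_distrib,
    sum_kron_left a, sum_kron_left b]

lemma L1 {N : ℕ} (q : ℂ) (hq : q ≠ 0) (a b c d : Fin N) :
    ∑ t : Fin N, ∑ m : Fin N, Rinv N q a b t m * Rhat N q t m c d
      = kron a c * kron b d := by
  rw [key_collapse]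
  simp only [Rhat, kron, Fin.ext_iff, Fin.lt_def]
  rcases lt_trichotomy a.1 b.1 with h | h | h
  · have h1 : a.1 ≠ b.1 := by omega
    have h2 : ¬ b.1 < a.1 := by omega
    split_ifs <;> first | ring1 | (exfalso; omega) | field_simp
  · have h' : a = b := Fin.ext h
    subst h'
    split_ifs <;> first | ring1 | (exfalso; omega) | (field_simp; ring1) | field_simp
  · have h1 : a.1 ≠ b.1 := by omega
    have h2 : ¬ a.1 < b.1 := by omega
    split_ifs <;> first | ring1 | (exfalso; omega) | field_simp

lemma L2 {N : ℕ} (q : ℂ) (hq : q ≠ 0) (t y : Fin N) :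
    ∑ n : Fin N, D N q n * Rhat N q t n y n = q ^ (2*(N:ℤ)+1) * kron t y := by
  have step : ∀ n : Fin N, D N q n * Rhat N q t n y n
      = kron t y * (kron t n * (q * q ^ (2*(n.1:ℤ)+2)))
        + kron t y * (if t.1+1 ≤ n.1 ∧ n.1 < N then (q - q⁻¹) * q ^ (2*(n.1:ℤ)+1+1) else 0) := by
    intro n
    have hn : n.1 < N := n.2
    simp only [D, Rhat, kron, Fin.ext_iff, Fin.lt_def,
      show (2 : ℤ) * ((n.1:ℤ) + 1) = 2*(n.1:ℤ)+2 by ring,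
      show (2*(n.1:ℤ)+1+1) = 2*(n.1:ℤ)+2 by ring]
    split_ifs <;> first | ring1 | (exfalso; omega)
  rw [Finset.sum_congr rfl fun n _ => step n, Finset.sum_add_distrib,
    ← Finset.mul_sum, ← Finset.mul_sum, sum_kron_left,
    sum_fin_ite (t.1+1) N le_rfl (fun m => (q - q⁻¹) * q ^ (2*(m:ℤ)+1+1)),
    telq q hq 1 (t.1+1) N t.2,
    show 2*((t.1+1:ℕ):ℤ)+1 = 2*(t.1:ℤ)+3 by push_cast; ring]
  have e3 : q * q ^ (2*(t.1:ℤ)+2) = q ^ (2*(t.1:ℤ)+3) := by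
    rw [show (2*(t.1:ℤ)+3) = (2*(t.1:ℤ)+2)+1 by ring, zpow_add_one₀ hq]
    ring
  rw [e3]
  ring

lemma L3 {N : ℕ} (q : ℂ) (hq : q ≠ 0) (k j : Fin N) :
    ∑ x : Fin N, (D N q x)⁻¹ * Rinv N q x k x j
      = q ^ (-(2*(N:ℤ)+1)) * kron j k := by
  have step : ∀ x : Fin N, (D N q x)⁻¹ * Rinv N q x k x j
      = kron j k * (kron x k * (q * q ^ (-(2*(x.1:ℤ)+2))))
        + kron j k * (-1) * (if k.1 ≤ x.1 ∧ x.1 < N then (q - q⁻¹) * q ^ ((-1:ℤ) - 2*(x.1:ℤ) - 1) else 0) := by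
    intro x
    have hx : x.1 < N := x.2
    have hD : (D N q x)⁻¹ = q ^ (-(2*(x.1:ℤ)+2)) := by
      rw [D, ← zpow_neg]
      congr 1
    rw [hD, show ((-1:ℤ) - 2*(x.1:ℤ) - 1) = -(2*(x.1:ℤ)+2) by ring]
    simp only [Rinv, Rhat, kron, Fin.ext_iff, Fin.lt_def]
    split_ifs <;> first | ring1 | (exfalso; omega)
  rw [Finset.sum_congr rfl fun x _ => step x, Finset.sum_add_distrib,
    ← Finset.mul_sum, ← Finset.mul_sum, sum_kron_right,
    sum_fin_ite k.1 N le_rfl (fun m => (q - q⁻¹) * q ^ ((-1:ℤ) - 2*(m:ℤ) - 1)),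
    telqneg q hq (-1) k.1 N (le_of_lt k.2)]
  have e3 : q * q ^ (-(2*(k.1:ℤ)+2)) = q ^ ((-1:ℤ) - 2*(k.1:ℤ)) := by
    rw [show ((-1:ℤ) - 2*(k.1:ℤ)) = (-(2*(k.1:ℤ)+2))+1 by ring, zpow_add_one₀ hq]
    ring
  rw [e3, show (-(2*(N:ℤ)+1)) = ((-1:ℤ) - 2*(N:ℤ)) by ring]
  ring
lemma L4a {N : ℕ} (q : ℂ) (hq : q ≠ 0) (k i : Fin N) :
    ∑ x : Fin N, (D N q x)⁻¹ *
        ((q * kron x k + (q - q⁻¹) * ((if x.1 < k.1 then 1 else 0) - 1)) *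
          (q * kron x i + (q - q⁻¹) * (if x.1 < i.1 then 1 else 0)))
      = kron i k * (D N q k)⁻¹ := by
  have hD : ∀ x : Fin N, (D N q x)⁻¹ = q ^ (-(2*(x.1:ℤ)+2)) := by
    intro x
    rw [D, ← zpow_neg]
    congr 1
  have step : ∀ x : Fin N, (D N q x)⁻¹ *
        ((q * kron x k + (q - q⁻¹) * ((if x.1 < k.1 then 1 else 0) - 1)) *
          (q * kron x i + (q - q⁻¹) * (if x.1 < i.1 then 1 else 0)))
      = kron x k * ((q * kron x i + (q - q⁻¹) * (if x.1 < i.1 then 1 else 0)) * q * q ^ (-(2*(x.1:ℤ)+2)))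
        + kron x i * ((0 - (q - q⁻¹)) * (if k.1 ≤ x.1 then 1 else 0) * q * q ^ (-(2*(x.1:ℤ)+2)))
        + (0 - (q - q⁻¹)) * (if k.1 ≤ x.1 ∧ x.1 < i.1 then (q - q⁻¹) * q ^ ((-1:ℤ) - 2*(x.1:ℤ) - 1) else 0) := by
    intro x
    rw [hD x, show ((-1:ℤ) - 2*(x.1:ℤ) - 1) = -(2*(x.1:ℤ)+2) by ring]
    simp only [kron, Fin.ext_iff]
    split_ifs <;> first | ring1 | (exfalso; omega)
  rw [Finset.sum_congr rfl fun x _ => step x, Finset.sum_add_distrib,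
    Finset.sum_add_distrib, sum_kron_right, sum_kron_right, ← Finset.mul_sum,
    sum_fin_ite k.1 i.1 (le_of_lt i.2) (fun m => (q - q⁻¹) * q ^ ((-1:ℤ) - 2*(m:ℤ) - 1))]
  have ek : (q:ℂ) ^ ((-1:ℤ) - 2*(k.1:ℤ)) = q ^ (-(2*(k.1:ℤ)+2)) * q := by
    rw [show ((-1:ℤ) - 2*(k.1:ℤ)) = (-(2*(k.1:ℤ)+2)) + 1 by ring, zpow_add_one₀ hq]
  have ei : (q:ℂ) ^ ((-1:ℤ) - 2*(i.1:ℤ)) = q ^ (-(2*(i.1:ℤ)+2)) * q := by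
    rw [show ((-1:ℤ) - 2*(i.1:ℤ)) = (-(2*(i.1:ℤ)+2)) + 1 by ring, zpow_add_one₀ hq]
  by_cases hik : i = k
  · subst hik
    rw [telqneg q hq (-1) i.1 i.1 le_rfl, hD i]
    simp only [kron, if_pos rfl, if_neg (lt_irrefl i.1), if_pos (le_refl i.1), le_refl, ↓reduceIte]
    field_simp
    ring
  · have hik' : i.1 ≠ k.1 := fun h => hik (Fin.ext h)
    have hki' : ¬ k = i := fun h => hik h.symm
    by_cases hki : k.1 ≤ i.1
    · rw [telqneg q hq (-1) k.1 i.1 hki, hD k, ek, ei]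
      simp only [kron, if_neg hik, if_neg hki',
        if_pos hki, if_pos (by omega : k.1 < i.1), if_neg (by omega : ¬ k.1 < k.1)]
      ring
    · rw [Finset.Ico_eq_empty (by omega), Finset.sum_empty, hD k]
      simp only [kron, if_neg hik, if_neg hki',
        if_neg hki, if_neg (by omega : ¬ k.1 < i.1), if_neg (by omega : ¬ k.1 < k.1)]
      ring

lemma L4 {N : ℕ} (q : ℂ) (hq : q ≠ 0) (i j k l : Fin N) :
    ∑ x : Fin N, ∑ p : Fin N,
        (D N q x)⁻¹ * Rinv N q p k x j * Rhat N q x i p l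
      = (D N q k)⁻¹ * kron i j * kron k l := by
  have h_inner : ∀ x : Fin N, ∑ p : Fin N, (D N q x)⁻¹ * Rinv N q p k x j * Rhat N q x i p l
      = kron k j * kron i l * ((D N q x)⁻¹ *
          ((q * kron x k + (q - q⁻¹) * ((if x.1 < k.1 then 1 else 0) - 1)) *
            (q * kron x i + (q - q⁻¹) * (if x.1 < i.1 then 1 else 0))))
        + kron k x * ((D N q x)⁻¹ * ((1 - kron k j) * Rhat N q x i j l)) := by
    intro x
    have hp : ∀ p : Fin N, Rinv N q p k x j
        = kron p x * ((q * kron x k + (q - q⁻¹) * ((if x.1 < k.1 then 1 else 0) - 1)) * kron k j)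
          + kron p j * ((1 - kron k j) * kron k x) := by
      intro p
      simp only [Rinv, Rhat, kron, Fin.ext_iff, Fin.lt_def]
      split_ifs <;> first | ring1 | (exfalso; omega)
    have hp2 : ∀ p : Fin N, (D N q x)⁻¹ * Rinv N q p k x j * Rhat N q x i p l
        = kron p x * ((D N q x)⁻¹ *
            ((q * kron x k + (q - q⁻¹) * ((if x.1 < k.1 then 1 else 0) - 1)) * kron k j * Rhat N q x i p l))
          + kron p j * ((D N q x)⁻¹ * ((1 - kron k j) * kron k x * Rhat N q x i p l)) := by
      intro p
      rw [hp p]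
      ring
    rw [Finset.sum_congr rfl fun p _ => hp2 p, Finset.sum_add_distrib,
      sum_kron_right, sum_kron_right]
    have hRx : Rhat N q x i x l = kron i l * (q * kron x i + (q - q⁻¹) * (if x.1 < i.1 then 1 else 0)) := by
      simp only [Rhat, kron, Fin.ext_iff, Fin.lt_def]
      split_ifs <;> first | ring1 | (exfalso; omega)
    rw [hRx]
    ring
  rw [Finset.sum_congr rfl fun x _ => h_inner x, Finset.sum_add_distrib,
    ← Finset.mul_sum, L4a q hq k i, sum_kron_left]
  have hR : Rhat N q k i j l = q * kron k i * kron k j * kron i l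
      + (1 - kron k i) * kron k l * kron i j
      + (q - q⁻¹) * (if k < i then 1 else 0) * kron k j * kron i l := rfl
  rw [hR]
  simp only [kron, Fin.ext_iff, Fin.lt_def]
  split_ifs <;> first | ring1 | (exfalso; omega)
lemma swap3 {N : ℕ} (f : Fin N → Fin N → Fin N → ℂ) :
    ∑ a : Fin N, ∑ b : Fin N, ∑ c : Fin N, f a b c
      = ∑ c : Fin N, ∑ a : Fin N, ∑ b : Fin N, f a b c :=
  (Finset.sum_congr rfl fun _ _ => Finset.sum_comm).trans Finset.sum_comm

lemma swap4 {N : ℕ} (f : Fin N → Fin N → Fin N → Fin N → ℂ) :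
    ∑ a : Fin N, ∑ b : Fin N, ∑ c : Fin N, ∑ d : Fin N, f a b c d
      = ∑ d : Fin N, ∑ a : Fin N, ∑ b : Fin N, ∑ c : Fin N, f a b c d :=
  (Finset.sum_congr rfl fun a _ => swap3 (f a)).trans Finset.sum_comm

lemma swap6A {N : ℕ} (f : Fin N → Fin N → Fin N → Fin N → Fin N → Fin N → ℂ) :
    ∑ m : Fin N, ∑ n : Fin N, ∑ x : Fin N, ∑ p : Fin N, ∑ t : Fin N, ∑ y : Fin N, f m n x p t y
      = ∑ x : Fin N, ∑ p : Fin N, ∑ t : Fin N, ∑ m : Fin N, ∑ y : Fin N, ∑ n : Fin N, f m n x p t y := by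
  calc ∑ m : Fin N, ∑ n : Fin N, ∑ x : Fin N, ∑ p : Fin N, ∑ t : Fin N, ∑ y : Fin N, f m n x p t y
      = ∑ x : Fin N, ∑ m : Fin N, ∑ n : Fin N, ∑ p : Fin N, ∑ t : Fin N, ∑ y : Fin N, f m n x p t y :=
        swap3 _
    _ = ∑ x : Fin N, ∑ p : Fin N, ∑ m : Fin N, ∑ n : Fin N, ∑ t : Fin N, ∑ y : Fin N, f m n x p t y :=
        Finset.sum_congr rfl fun x _ => swap3 _
    _ = ∑ x : Fin N, ∑ p : Fin N, ∑ t : Fin N, ∑ m : Fin N, ∑ n : Fin N, ∑ y : Fin N, f m n x p t y :=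
        Finset.sum_congr rfl fun x _ => Finset.sum_congr rfl fun p _ => swap3 _
    _ = ∑ x : Fin N, ∑ p : Fin N, ∑ t : Fin N, ∑ m : Fin N, ∑ y : Fin N, ∑ n : Fin N, f m n x p t y :=
        Finset.sum_congr rfl fun x _ => Finset.sum_congr rfl fun p _ =>
          Finset.sum_congr rfl fun t _ => Finset.sum_congr rfl fun m _ => Finset.sum_comm

lemma swap6B {N : ℕ} (f : Fin N → Fin N → Fin N → Fin N → Fin N → Fin N → ℂ) :
    ∑ m : Fin N, ∑ r : Fin N, ∑ x : Fin N, ∑ p : Fin N, ∑ t : Fin N, ∑ y : Fin N, f m r x p t y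
      = ∑ x : Fin N, ∑ p : Fin N, ∑ y : Fin N, ∑ r : Fin N, ∑ t : Fin N, ∑ m : Fin N, f m r x p t y := by
  calc ∑ m : Fin N, ∑ r : Fin N, ∑ x : Fin N, ∑ p : Fin N, ∑ t : Fin N, ∑ y : Fin N, f m r x p t y
      = ∑ x : Fin N, ∑ m : Fin N, ∑ r : Fin N, ∑ p : Fin N, ∑ t : Fin N, ∑ y : Fin N, f m r x p t y :=
        swap3 _
    _ = ∑ x : Fin N, ∑ p : Fin N, ∑ m : Fin N, ∑ r : Fin N, ∑ t : Fin N, ∑ y : Fin N, f m r x p t y :=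
        Finset.sum_congr rfl fun x _ => swap3 _
    _ = ∑ x : Fin N, ∑ p : Fin N, ∑ y : Fin N, ∑ m : Fin N, ∑ r : Fin N, ∑ t : Fin N, f m r x p t y :=
        Finset.sum_congr rfl fun x _ => Finset.sum_congr rfl fun p _ => swap4 _
    _ = ∑ x : Fin N, ∑ p : Fin N, ∑ y : Fin N, ∑ r : Fin N, ∑ m : Fin N, ∑ t : Fin N, f m r x p t y :=
        Finset.sum_congr rfl fun x _ => Finset.sum_congr rfl fun p _ =>
          Finset.sum_congr rfl fun y _ => Finset.sum_comm
    _ = ∑ x : Fin N, ∑ p : Fin N, ∑ y : Fin N, ∑ r : Fin N, ∑ t : Fin N, ∑ m : Fin N, f m r x p t y :=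
        Finset.sum_congr rfl fun x _ => Finset.sum_congr rfl fun p _ =>
          Finset.sum_congr rfl fun y _ => Finset.sum_congr rfl fun r _ => Finset.sum_comm


/-- Braiding matrix entries of `Γ_{+,z}`:
`σ^{mnrs}_{ijkl} = D_k D_x^{−1} (R̂^{−1})^{pk}_{xj} R̂^{tn}_{yr} (R̂^{−1})^{xi}_{tm} R̂^{ys}_{pl}`
(summation over `x, p, t, y`); here `m n r s` are the upper and `i j k l` the lower indices. -/
noncomputable def sigmaPlus (N : ℕ) (q : ℂ) (m n r s i j k l : Fin N) : ℂ :=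
  ∑ x : Fin N, ∑ p : Fin N, ∑ t : Fin N, ∑ y : Fin N,
    D N q k * (D N q x)⁻¹ *
      Rinv N q p k x j * Rhat N q t n y r * Rinv N q x i t m * Rhat N q y s p l

/-- The invariant-metric matrix `G(α,β)` with entries
`G_{(ij),(kl)} = q^{2j} α δ_{il} δ_{jk} + β δ_{ij} δ_{kl}`. -/
noncomputable def G (N : ℕ) (q α β : ℂ) : Matrix (Fin N × Fin N) (Fin N × Fin N) ℂ :=
  Matrix.of fun r c =>
    q ^ (2 * ((r.2.1 : ℤ) + 1)) * α * kron r.1 c.2 * kron r.2 c.1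
      + β * kron r.1 r.2 * kron c.1 c.2

lemma Apart {N : ℕ} (q : ℂ) (hq : q ≠ 0) (α : ℂ) (i j k l : Fin N) :
    (∑ m : Fin N, ∑ n : Fin N,
        sigmaPlus N q m n n m i j k l * (q ^ (2 * ((n.1:ℤ) + 1)) * α))
      = q ^ (2 * ((j.1:ℤ) + 1)) * α * kron i l * kron j k := by
  have e0 : ∀ m n : Fin N, sigmaPlus N q m n n m i j k l * (q ^ (2 * ((n.1:ℤ) + 1)) * α)
      = ∑ x : Fin N, ∑ p : Fin N, ∑ t : Fin N, ∑ y : Fin N,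
          D N q n * Rhat N q t n y n *
            (α * (D N q k * ((D N q x)⁻¹ * Rinv N q p k x j) *
              (Rinv N q x i t m * Rhat N q y m p l))) := by
    intro m n
    rw [sigmaPlus, Finset.sum_mul]
    refine Finset.sum_congr rfl fun x _ => ?_
    rw [Finset.sum_mul]
    refine Finset.sum_congr rfl fun p _ => ?_
    rw [Finset.sum_mul]
    refine Finset.sum_congr rfl fun t _ => ?_
    rw [Finset.sum_mul]
    refine Finset.sum_congr rfl fun y _ => ?_
    simp only [D]
    ring
  rw [Finset.sum_congr rfl fun m _ => Finset.sum_congr rfl fun n _ => e0 m n, swap6A]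
  have e1 : ∀ x p t m y : Fin N,
      (∑ n : Fin N, D N q n * Rhat N q t n y n *
          (α * (D N q k * ((D N q x)⁻¹ * Rinv N q p k x j) *
            (Rinv N q x i t m * Rhat N q y m p l))))
      = (q ^ (2*(N:ℤ)+1) * kron t y) *
          (α * (D N q k * ((D N q x)⁻¹ * Rinv N q p k x j) *
            (Rinv N q x i t m * Rhat N q y m p l))) := by
    intro x p t m y
    rw [← L2 q hq t y, Finset.sum_mul]
  rw [Finset.sum_congr rfl fun x _ => Finset.sum_congr rfl fun p _ => Finset.sum_congr rfl fun t _ =>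
    Finset.sum_congr rfl fun m _ => Finset.sum_congr rfl fun y _ => e1 x p t m y]
  have e2 : ∀ x p t m : Fin N,
      (∑ y : Fin N, (q ^ (2*(N:ℤ)+1) * kron t y) *
          (α * (D N q k * ((D N q x)⁻¹ * Rinv N q p k x j) *
            (Rinv N q x i t m * Rhat N q y m p l))))
      = q ^ (2*(N:ℤ)+1) *
          (α * (D N q k * ((D N q x)⁻¹ * Rinv N q p k x j) *
            (Rinv N q x i t m * Rhat N q t m p l))) := by
    intro x p t m
    have h1 : ∀ y : Fin N, (q ^ (2*(N:ℤ)+1) * kron t y) *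
          (α * (D N q k * ((D N q x)⁻¹ * Rinv N q p k x j) *
            (Rinv N q x i t m * Rhat N q y m p l)))
        = kron t y * (q ^ (2*(N:ℤ)+1) *
            (α * (D N q k * ((D N q x)⁻¹ * Rinv N q p k x j) *
              (Rinv N q x i t m * Rhat N q y m p l)))) := fun y => by ring
    calc (∑ y : Fin N, (q ^ (2*(N:ℤ)+1) * kron t y) *
          (α * (D N q k * ((D N q x)⁻¹ * Rinv N q p k x j) *
            (Rinv N q x i t m * Rhat N q y m p l))))
        = ∑ y : Fin N, kron t y * (q ^ (2*(N:ℤ)+1) *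
            (α * (D N q k * ((D N q x)⁻¹ * Rinv N q p k x j) *
              (Rinv N q x i t m * Rhat N q y m p l)))) :=
          Finset.sum_congr rfl fun y _ => h1 y
      _ = q ^ (2*(N:ℤ)+1) *
            (α * (D N q k * ((D N q x)⁻¹ * Rinv N q p k x j) *
              (Rinv N q x i t m * Rhat N q t m p l))) := sum_kron_left t _
  rw [Finset.sum_congr rfl fun x _ => Finset.sum_congr rfl fun p _ => Finset.sum_congr rfl fun t _ =>
    Finset.sum_congr rfl fun m _ => e2 x p t m]
  have e3 : ∀ x p : Fin N,
      (∑ t : Fin N, ∑ m : Fin N, q ^ (2*(N:ℤ)+1) *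
          (α * (D N q k * ((D N q x)⁻¹ * Rinv N q p k x j) *
            (Rinv N q x i t m * Rhat N q t m p l))))
      = (kron x p * kron i l) * (q ^ (2*(N:ℤ)+1) *
          (α * (D N q k * ((D N q x)⁻¹ * Rinv N q p k x j)))) := by
    intro x p
    rw [← L1 q hq x i p l]
    simp only [Finset.sum_mul]
    refine Finset.sum_congr rfl fun t _ => Finset.sum_congr rfl fun m _ => by ring
  rw [Finset.sum_congr rfl fun x _ => Finset.sum_congr rfl fun p _ => e3 x p]
  have e4 : ∀ x : Fin N,
      (∑ p : Fin N, (kron x p * kron i l) * (q ^ (2*(N:ℤ)+1) *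
          (α * (D N q k * ((D N q x)⁻¹ * Rinv N q p k x j)))))
      = (D N q x)⁻¹ * Rinv N q x k x j *
          (kron i l * (q ^ (2*(N:ℤ)+1) * (α * D N q k))) := by
    intro x
    have h1 : ∀ p : Fin N, (kron x p * kron i l) * (q ^ (2*(N:ℤ)+1) *
          (α * (D N q k * ((D N q x)⁻¹ * Rinv N q p k x j))))
        = kron x p * ((D N q x)⁻¹ * Rinv N q p k x j *
            (kron i l * (q ^ (2*(N:ℤ)+1) * (α * D N q k)))) := fun p => by ring
    calc (∑ p : Fin N, (kron x p * kron i l) * (q ^ (2*(N:ℤ)+1) *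
          (α * (D N q k * ((D N q x)⁻¹ * Rinv N q p k x j)))))
        = ∑ p : Fin N, kron x p * ((D N q x)⁻¹ * Rinv N q p k x j *
            (kron i l * (q ^ (2*(N:ℤ)+1) * (α * D N q k)))) :=
          Finset.sum_congr rfl fun p _ => h1 p
      _ = (D N q x)⁻¹ * Rinv N q x k x j *
            (kron i l * (q ^ (2*(N:ℤ)+1) * (α * D N q k))) := sum_kron_left x _
  rw [Finset.sum_congr rfl fun x _ => e4 x, ← Finset.sum_mul, L3 q hq k j]
  have hqq : (q:ℂ) ^ (-(2*(N:ℤ)+1)) * q ^ (2*(N:ℤ)+1) = 1 := by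
    rw [← zpow_add₀ hq, show -(2*(N:ℤ)+1) + (2*(N:ℤ)+1) = 0 by ring, zpow_zero]
  have hkj : kron j k * D N q k = kron j k * q ^ (2 * ((j.1:ℤ) + 1)) := by
    by_cases h : j = k
    · subst h; rfl
    · simp [kron, h]
  calc q ^ (-(2*(N:ℤ)+1)) * kron j k * (kron i l * (q ^ (2*(N:ℤ)+1) * (α * D N q k)))
      = (q ^ (-(2*(N:ℤ)+1)) * q ^ (2*(N:ℤ)+1)) * (α * kron i l) * (kron j k * D N q k) := by
        ring
    _ = q ^ (2 * ((j.1:ℤ) + 1)) * α * kron i l * kron j k := by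
        rw [hqq, hkj]; ring

lemma Bpart {N : ℕ} (q : ℂ) (hq : q ≠ 0) (β : ℂ) (i j k l : Fin N) :
    (∑ m : Fin N, ∑ r : Fin N, sigmaPlus N q m m r r i j k l * β)
      = β * kron i j * kron k l := by
  have e0 : ∀ m r : Fin N, sigmaPlus N q m m r r i j k l * β
      = ∑ x : Fin N, ∑ p : Fin N, ∑ t : Fin N, ∑ y : Fin N,
          Rinv N q x i t m * Rhat N q t m y r *
            (β * (D N q k * ((D N q x)⁻¹ * Rinv N q p k x j) * Rhat N q y r p l)) := by
    intro m r
    rw [sigmaPlus, Finset.sum_mul]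
    refine Finset.sum_congr rfl fun x _ => ?_
    rw [Finset.sum_mul]
    refine Finset.sum_congr rfl fun p _ => ?_
    rw [Finset.sum_mul]
    refine Finset.sum_congr rfl fun t _ => ?_
    rw [Finset.sum_mul]
    refine Finset.sum_congr rfl fun y _ => ?_
    ring
  rw [Finset.sum_congr rfl fun m _ => Finset.sum_congr rfl fun r _ => e0 m r, swap6B]
  have e1 : ∀ x p y r : Fin N,
      (∑ t : Fin N, ∑ m : Fin N, Rinv N q x i t m * Rhat N q t m y r *
          (β * (D N q k * ((D N q x)⁻¹ * Rinv N q p k x j) * Rhat N q y r p l)))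
      = (kron x y * kron i r) *
          (β * (D N q k * ((D N q x)⁻¹ * Rinv N q p k x j) * Rhat N q y r p l)) := by
    intro x p y r
    rw [← L1 q hq x i y r]
    simp only [Finset.sum_mul]
  rw [Finset.sum_congr rfl fun x _ => Finset.sum_congr rfl fun p _ => Finset.sum_congr rfl fun y _ =>
    Finset.sum_congr rfl fun r _ => e1 x p y r]
  have e2 : ∀ x p y : Fin N,
      (∑ r : Fin N, (kron x y * kron i r) *
          (β * (D N q k * ((D N q x)⁻¹ * Rinv N q p k x j) * Rhat N q y r p l)))
      = kron x y * (β * (D N q k * ((D N q x)⁻¹ * Rinv N q p k x j) * Rhat N q y i p l)) := by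
    intro x p y
    have h1 : ∀ r : Fin N, (kron x y * kron i r) *
          (β * (D N q k * ((D N q x)⁻¹ * Rinv N q p k x j) * Rhat N q y r p l))
        = kron i r * (kron x y *
            (β * (D N q k * ((D N q x)⁻¹ * Rinv N q p k x j) * Rhat N q y r p l))) := fun r => by ring
    calc (∑ r : Fin N, (kron x y * kron i r) *
          (β * (D N q k * ((D N q x)⁻¹ * Rinv N q p k x j) * Rhat N q y r p l)))
        = ∑ r : Fin N, kron i r * (kron x y *
            (β * (D N q k * ((D N q x)⁻¹ * Rinv N q p k x j) * Rhat N q y r p l))) :=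
          Finset.sum_congr rfl fun r _ => h1 r
      _ = kron x y * (β * (D N q k * ((D N q x)⁻¹ * Rinv N q p k x j) * Rhat N q y i p l)) :=
          sum_kron_left i _
  rw [Finset.sum_congr rfl fun x _ => Finset.sum_congr rfl fun p _ => Finset.sum_congr rfl fun y _ => e2 x p y]
  have e3 : ∀ x p : Fin N,
      (∑ y : Fin N, kron x y *
          (β * (D N q k * ((D N q x)⁻¹ * Rinv N q p k x j) * Rhat N q y i p l)))
      = β * (D N q k * ((D N q x)⁻¹ * Rinv N q p k x j) * Rhat N q x i p l) :=
    fun x p => sum_kron_left x _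
  rw [Finset.sum_congr rfl fun x _ => Finset.sum_congr rfl fun p _ => e3 x p]
  have e4 : ∀ x p : Fin N, β * (D N q k * ((D N q x)⁻¹ * Rinv N q p k x j) * Rhat N q x i p l)
      = (D N q x)⁻¹ * Rinv N q p k x j * Rhat N q x i p l * (β * D N q k) := fun x p => by ring
  rw [Finset.sum_congr rfl fun x _ => Finset.sum_congr rfl fun p _ => e4 x p]
  have e5 : (∑ x : Fin N, ∑ p : Fin N,
        (D N q x)⁻¹ * Rinv N q p k x j * Rhat N q x i p l * (β * D N q k))
      = ((D N q k)⁻¹ * kron i j * kron k l) * (β * D N q k) := by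
    rw [← L4 q hq i j k l]
    simp only [Finset.sum_mul]
  rw [e5]
  have hDk : D N q k ≠ 0 := by
    rw [D]
    exact zpow_ne_zero _ hq
  calc (D N q k)⁻¹ * kron i j * kron k l * (β * D N q k)
      = (D N q k * (D N q k)⁻¹) * (β * kron i j * kron k l) := by ring
    _ = β * kron i j * kron k l := by rw [mul_inv_cancel₀ hDk]; ring

/-- Every invariant metric on `Γ_{+,z}` is symmetric with respect to the braiding:
`Σ_{m,n,r,s} σ^{mnrs}_{ijkl} G_{(mn),(rs)} = G_{(ij),(kl)}`. -/
theorem sigmaPlus_symmetric_metric (N : ℕ) (hN : 2 ≤ N) (q : ℂ) (hq : q ≠ 0)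
    (α β : ℂ) (i j k l : Fin N) :
    ∑ m : Fin N, ∑ n : Fin N, ∑ r : Fin N, ∑ s : Fin N,
      sigmaPlus N q m n r s i j k l * G N q α β (m, n) (r, s)
      = G N q α β (i, j) (k, l) := by
  have hsplit : ∀ m n r s : Fin N,
      sigmaPlus N q m n r s i j k l * G N q α β (m, n) (r, s)
      = kron m s * (kron n r * (sigmaPlus N q m n r s i j k l * (q ^ (2 * ((n.1:ℤ) + 1)) * α)))
        + kron r s * (kron m n * (sigmaPlus N q m n r s i j k l * β)) := by
    intro m n r s
    simp only [G, Matrix.of_apply]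
    ring
  rw [Finset.sum_congr rfl fun m _ => Finset.sum_congr rfl fun n _ =>
    Finset.sum_congr rfl fun r _ => Finset.sum_congr rfl fun s _ => hsplit m n r s]
  simp only [Finset.sum_add_distrib]
  have hS1 : (∑ m : Fin N, ∑ n : Fin N, ∑ r : Fin N, ∑ s : Fin N,
      kron m s * (kron n r * (sigmaPlus N q m n r s i j k l * (q ^ (2 * ((n.1:ℤ) + 1)) * α))))
      = ∑ m : Fin N, ∑ n : Fin N, sigmaPlus N q m n n m i j k l * (q ^ (2 * ((n.1:ℤ) + 1)) * α) := by
    refine Finset.sum_congr rfl fun m _ => Finset.sum_congr rfl fun n _ => ?_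
    calc ∑ r : Fin N, ∑ s : Fin N,
        kron m s * (kron n r * (sigmaPlus N q m n r s i j k l * (q ^ (2 * ((n.1:ℤ) + 1)) * α)))
        = ∑ r : Fin N, kron n r * (sigmaPlus N q m n r m i j k l * (q ^ (2 * ((n.1:ℤ) + 1)) * α)) := by
          refine Finset.sum_congr rfl fun r _ => ?_
          have h2 : ∀ s : Fin N,
              kron m s * (kron n r * (sigmaPlus N q m n r s i j k l * (q ^ (2 * ((n.1:ℤ) + 1)) * α)))
              = kron m s * ((fun s' => kron n r * (sigmaPlus N q m n r s' i j k l * (q ^ (2 * ((n.1:ℤ) + 1)) * α))) s) := fun s => rfl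
          exact sum_kron_left m _
      _ = sigmaPlus N q m n n m i j k l * (q ^ (2 * ((n.1:ℤ) + 1)) * α) := sum_kron_left n _
  have hS2 : (∑ m : Fin N, ∑ n : Fin N, ∑ r : Fin N, ∑ s : Fin N,
      kron r s * (kron m n * (sigmaPlus N q m n r s i j k l * β)))
      = ∑ m : Fin N, ∑ r : Fin N, sigmaPlus N q m m r r i j k l * β := by
    have h1 : ∀ m n : Fin N, (∑ r : Fin N, ∑ s : Fin N,
        kron r s * (kron m n * (sigmaPlus N q m n r s i j k l * β)))
        = kron m n * ∑ r : Fin N, sigmaPlus N q m n r r i j k l * β := by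
      intro m n
      calc ∑ r : Fin N, ∑ s : Fin N, kron r s * (kron m n * (sigmaPlus N q m n r s i j k l * β))
          = ∑ r : Fin N, kron m n * (sigmaPlus N q m n r r i j k l * β) :=
            Finset.sum_congr rfl fun r _ => sum_kron_left r _
        _ = kron m n * ∑ r : Fin N, sigmaPlus N q m n r r i j k l * β := by
            rw [Finset.mul_sum]
    calc (∑ m : Fin N, ∑ n : Fin N, ∑ r : Fin N, ∑ s : Fin N,
        kron r s * (kron m n * (sigmaPlus N q m n r s i j k l * β)))
        = ∑ m : Fin N, ∑ n : Fin N, kron m n * ∑ r : Fin N, sigmaPlus N q m n r r i j k l * β :=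
          Finset.sum_congr rfl fun m _ => Finset.sum_congr rfl fun n _ => h1 m n
      _ = ∑ m : Fin N, ∑ r : Fin N, sigmaPlus N q m m r r i j k l * β :=
          Finset.sum_congr rfl fun m _ => sum_kron_left m _
  rw [hS1, hS2, Apart q hq α i j k l, Bpart q hq β i j k l]
  simp only [G, Matrix.of_apply]

end Stmt4
end

section
/- Let N ≥ 2 be an integer and q ∈ ℂ with q ≠ 0. For all α, β ∈ ℂ and all indices i,j,k,l ∈ {1,…,N}, one has Σ_{m,n,r,s} σ^{mnrs}_{ijkl} G_{(mn),(rs)} = G_{(ij),(kl)}, where σ is the braiding matrix of the calculus Γ_{−,z} on SL_q(N) and G = G(α,β) is the invariant-metric matrix. Equivalently (Corollary 2.5 of the paper for Γ_{−,z}): every invariant metric g on Γ_{−,z} is symmetric with respect to the braiding, g∘σ = g. -/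
open scoped BigOperators

namespace Stmt5

/-- Kronecker delta with values in `ℂ`. -/
noncomputable def kron {N : ℕ} (i j : Fin N) : ℂ := if i = j then 1 else 0

/-- The standard R-matrix `R̂` of `SL_q(N)`: entry `R̂^{ij}_{kl}`. -/
noncomputable def Rhat (N : ℕ) (q : ℂ) (i j k l : Fin N) : ℂ :=
  q * kron i j * kron i k * kron j l
    + (1 - kron i j) * kron i l * kron j k
    + (q - q⁻¹) * (if i < j then 1 else 0) * kron i k * kron j l

/-- The inverse R-matrix: `R̂⁻¹ = R̂ − Q·id` with `Q = q − q⁻¹`. -/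
noncomputable def Rinv (N : ℕ) (q : ℂ) (i j k l : Fin N) : ℂ :=
  Rhat N q i j k l - (q - q⁻¹) * kron i k * kron j l

/-- `D_i = q^{2i}`. -/
noncomputable def D (N : ℕ) (q : ℂ) (i : Fin N) : ℂ := q ^ (2 * ((i.1 : ℤ) + 1))

/-- Braiding matrix entries of `Γ_{−,z}`:
`σ^{mnrs}_{ijkl} = D_k D_x^{−1} R̂^{pk}_{xj} (R̂^{−1})^{tn}_{yr} R̂^{xi}_{tm} (R̂^{−1})^{ys}_{pl}`
(summation over `x, p, t, y`); here `m n r s` are the upper and `i j k l` the lower indices. -/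
noncomputable def sigmaMinus (N : ℕ) (q : ℂ) (m n r s i j k l : Fin N) : ℂ :=
  ∑ x : Fin N, ∑ p : Fin N, ∑ t : Fin N, ∑ y : Fin N,
    D N q k * (D N q x)⁻¹ *
      Rhat N q p k x j * Rinv N q t n y r * Rhat N q x i t m * Rinv N q y s p l

/-- The invariant-metric matrix `G(α,β)` with entries
`G_{(ij),(kl)} = q^{2j} α δ_{il} δ_{jk} + β δ_{ij} δ_{kl}`. -/
noncomputable def G (N : ℕ) (q α β : ℂ) : Matrix (Fin N × Fin N) (Fin N × Fin N) ℂ :=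
  Matrix.of fun r c =>
    q ^ (2 * ((r.2.1 : ℤ) + 1)) * α * kron r.1 c.2 * kron r.2 c.1
      + β * kron r.1 r.2 * kron c.1 c.2

/-!
Write `R̂ = c · id + (1 - δ) · flip` with `c_{ij} = q δ_{ij} + Q [i < j]` (`Rcoeff`). As `G(α,β)`
is `α` times the `D`-weighted flip pairing plus `β` times the trace pairing, contracting `σ` with `G`
reduces, after reordering the sums, to four identities for `R̂`: `R̂ R̂⁻¹ = 1` (the Hecke relation
for the coefficients), the quantum traces `Σ_n (R̂⁻¹)^{tn}_{yn} D_n = q δ_{ty}` and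
`Σ_x D_x⁻¹ R̂^{xk}_{xj} = q⁻¹ δ_{kj}`, and the twisted inverse
`Σ_{x,p} D_k D_x⁻¹ R̂^{pk}_{xj} (R̂⁻¹)^{xi}_{pl} = δ_{ij} δ_{kl}`. The last three come down to the
telescoping sum `Σ_{n<m} Q q^{2n+2} = q^{2m+1} - q`, taken at `q` and at `q⁻¹`.
-/

open Finset

theorem sum_lt_sub_inv_mul_pow {K : Type*} [Field K] {q : K} (hq : q ≠ 0) {N m : ℕ}
    (hm : m ≤ N) :
    ∑ i : Fin N, (if i.1 < m then (q - q⁻¹) * q ^ (2 * i.1 + 2) else 0) = q ^ (2 * m + 1) - q := by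
  have hfilter : (range N).filter (· < m) = range m := by
    ext i
    simp only [mem_filter, mem_range]
    omega
  have hstep (i : ℕ) : (q - q⁻¹) * q ^ (2 * i + 2) = q ^ (2 * (i + 1) + 1) - q ^ (2 * i + 1) := by
    field_simp
    ring
  rw [Fin.sum_univ_eq_sum_range (fun i => if i < m then (q - q⁻¹) * q ^ (2 * i + 2) else 0),
    ← sum_filter, hfilter]
  simp only [hstep, sum_range_sub (fun i => q ^ (2 * i + 1))]
  simp

section

variable {N : ℕ} {q : ℂ}

theorem D_eq_pow (i : Fin N) : D N q i = q ^ (2 * i.1 + 2) := by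
  rw [D, ← zpow_natCast]
  push_cast
  ring_nf

theorem D_ne_zero (hq : q ≠ 0) (i : Fin N) : D N q i ≠ 0 := by
  rw [D_eq_pow]
  exact pow_ne_zero _ hq

theorem sum_lt_sub_inv_mul_D (hq : q ≠ 0) {m : ℕ} (hm : m ≤ N) :
    ∑ n : Fin N, (if n.1 < m then (q - q⁻¹) * D N q n else 0) = q ^ (2 * m + 1) - q := by
  simp only [D_eq_pow, sum_lt_sub_inv_mul_pow hq hm]

theorem sum_lt_sub_inv_mul_D_inv (hq : q ≠ 0) {m : ℕ} (hm : m ≤ N) :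
    ∑ n : Fin N, (if n.1 < m then (q - q⁻¹) * (D N q n)⁻¹ else 0) = q⁻¹ - q⁻¹ ^ (2 * m + 1) := by
  calc ∑ n : Fin N, (if n.1 < m then (q - q⁻¹) * (D N q n)⁻¹ else 0)
      = -∑ n : Fin N, (if n.1 < m then (q⁻¹ - q⁻¹⁻¹) * q⁻¹ ^ (2 * n.1 + 2) else 0) := by
        rw [← sum_neg_distrib]
        refine sum_congr rfl fun n _ => ?_
        split_ifs
        · rw [D_eq_pow, inv_pow, inv_inv]
          ring
        · simp
    _ = q⁻¹ - q⁻¹ ^ (2 * m + 1) := by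
        rw [sum_lt_sub_inv_mul_pow (inv_ne_zero hq) hm]
        ring

theorem kron_self (i : Fin N) : kron i i = 1 := if_pos rfl

noncomputable def Rcoeff (q : ℂ) (i j : Fin N) : ℂ :=
  q * kron i j + (q - q⁻¹) * if i < j then 1 else 0

theorem Rcoeff_self (i : Fin N) : Rcoeff q i i = q := by
  simp [Rcoeff, kron_self]

theorem Rcoeff_of_lt {i j : Fin N} (h : i < j) : Rcoeff q i j = q - q⁻¹ := by
  simp [Rcoeff, kron, h, h.ne]

theorem Rcoeff_of_gt {i j : Fin N} (h : j < i) : Rcoeff q i j = 0 := by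
  simp [Rcoeff, kron, h.ne', not_lt_of_gt h]

theorem Rhat_eq_Rcoeff (i j k l : Fin N) :
    Rhat N q i j k l = Rcoeff q i j * kron i k * kron j l + (1 - kron i j) * kron i l * kron j k := by
  simp only [Rhat, Rcoeff]
  ring

theorem Rinv_eq_Rcoeff (i j k l : Fin N) :
    Rinv N q i j k l = (Rcoeff q i j - (q - q⁻¹)) * kron i k * kron j l
      + (1 - kron i j) * kron i l * kron j k := by
  rw [Rinv, Rhat_eq_Rcoeff]
  ring

theorem Rhat_diag_left (x k j : Fin N) : Rhat N q x k x j = Rcoeff q x k * kron k j := by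
  rw [Rhat_eq_Rcoeff, kron_self]
  rcases eq_or_ne x k with rfl | h
  · simp [kron]
  · simp [kron, h, h.symm]

theorem Rinv_diag_left (x i l : Fin N) :
    Rinv N q x i x l = (Rcoeff q x i - (q - q⁻¹)) * kron i l := by
  rw [Rinv_eq_Rcoeff, kron_self]
  rcases eq_or_ne x i with rfl | h
  · simp [kron]
  · simp [kron, h, h.symm]

theorem Rinv_diag_right (t n y : Fin N) :
    Rinv N q t n y n = (Rcoeff q t n - (q - q⁻¹)) * kron t y := by
  rw [Rinv_eq_Rcoeff, kron_self]
  by_cases h : t = n <;> simp [kron, h]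

theorem Rcoeff_hecke (hq : q ≠ 0) (i j : Fin N) :
    Rcoeff q i j * (Rcoeff q i j - (q - q⁻¹)) + (1 - kron i j) * (1 - kron j i) = 1 := by
  rcases lt_trichotomy i j with h | rfl | h
  · simp [Rcoeff_of_lt h, kron, h.ne, h.ne']
  · rw [Rcoeff_self, kron_self, sub_sub_cancel, mul_inv_cancel₀ hq]
    ring
  · simp [Rcoeff_of_gt h, kron, h.ne, h.ne']

theorem one_sub_kron_mul_Rcoeff_add_Rcoeff (i j : Fin N) :
    (1 - kron i j) * (Rcoeff q i j + Rcoeff q j i - (q - q⁻¹)) = 0 := by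
  rcases lt_trichotomy i j with h | rfl | h
  · simp [Rcoeff_of_lt h, Rcoeff_of_gt h]
  · simp [kron_self]
  · simp [Rcoeff_of_lt h, Rcoeff_of_gt h]

theorem sum_Rhat_mul_Rinv (hq : q ≠ 0) (x i y r : Fin N) :
    ∑ t, ∑ m, Rhat N q x i t m * Rinv N q t m y r = kron x y * kron i r := by
  have collapse : ∑ t, ∑ m, Rhat N q x i t m * Rinv N q t m y r
      = Rcoeff q x i * Rinv N q x i y r + (1 - kron x i) * Rinv N q i x y r := by
    simp [Rhat_eq_Rcoeff, kron, add_mul, sum_add_distrib]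
  rw [collapse, Rinv_eq_Rcoeff, Rinv_eq_Rcoeff]
  linear_combination kron x y * kron i r * Rcoeff_hecke hq x i
    + kron x r * kron i y * one_sub_kron_mul_Rcoeff_add_Rcoeff (q := q) x i

theorem sum_Rcoeff_sub_mul_D (hq : q ≠ 0) (t : Fin N) :
    ∑ n, (Rcoeff q t n - (q - q⁻¹)) * D N q n = q := by
  have h (n : Fin N) : (Rcoeff q t n - (q - q⁻¹)) * D N q n =
      (if t = n then q * D N q t else 0) - if n.1 < t.1 + 1 then (q - q⁻¹) * D N q n else 0 := by
    rcases lt_trichotomy t n with htn | rfl | htn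
    · simp [Rcoeff_of_lt htn, htn.ne, show ¬ n.1 < t.1 + 1 by omega]
    · rw [Rcoeff_self, if_pos rfl, if_pos (Nat.lt_succ_self _)]
      ring
    · rw [Rcoeff_of_gt htn, if_neg htn.ne', if_pos (show n.1 < t.1 + 1 by omega)]
      ring
  simp only [h]
  rw [sum_sub_distrib, sum_ite_eq, if_pos (mem_univ t),
    sum_lt_sub_inv_mul_D hq (m := t.1 + 1) t.isLt, D_eq_pow]
  ring

theorem sum_D_inv_mul_Rcoeff (hq : q ≠ 0) (k : Fin N) :
    ∑ x, (D N q x)⁻¹ * Rcoeff q x k = q⁻¹ := by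
  have h (x : Fin N) : (D N q x)⁻¹ * Rcoeff q x k =
      (if k = x then q * (D N q k)⁻¹ else 0) + if x.1 < k.1 then (q - q⁻¹) * (D N q x)⁻¹ else 0 := by
    rcases lt_trichotomy x k with hxk | rfl | hxk
    · rw [Rcoeff_of_lt hxk, if_neg hxk.ne', if_pos (show x.1 < k.1 from hxk)]
      ring
    · rw [Rcoeff_self, if_pos rfl, if_neg (lt_irrefl _)]
      ring
    · simp [Rcoeff_of_gt hxk, hxk.ne, show ¬ x.1 < k.1 by omega]
  simp only [h]
  rw [sum_add_distrib, sum_ite_eq, if_pos (mem_univ k), sum_lt_sub_inv_mul_D_inv hq k.isLt.le,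
    D_eq_pow, inv_pow]
  field_simp
  ring

theorem sum_D_mul_Rcoeff_mul_Rcoeff_sub (hq : q ≠ 0) (i k : Fin N) :
    ∑ p, D N q k * (D N q p)⁻¹ * (Rcoeff q p k * (Rcoeff q p i - (q - q⁻¹))) = kron i k := by
  rcases lt_trichotomy i k with hik | rfl | hki
  · -- the indicator of `i ≤ p < k` is split as `[p < k] - [p < i]`
    have h (p : Fin N) : (D N q p)⁻¹ * (Rcoeff q p k * (Rcoeff q p i - (q - q⁻¹))) =
        (q - q⁻¹) * ((if i = p then q * (D N q i)⁻¹ else 0) - (if k = p then q * (D N q k)⁻¹ else 0)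
          - (if p.1 < k.1 then (q - q⁻¹) * (D N q p)⁻¹ else 0)
          + (if p.1 < i.1 then (q - q⁻¹) * (D N q p)⁻¹ else 0)) := by
      rcases lt_trichotomy p i with hpi | rfl | hpi
      · have hpk := hpi.trans hik
        rw [Rcoeff_of_lt hpk, Rcoeff_of_lt hpi, if_neg hpi.ne', if_neg hpk.ne',
          if_pos (show p.1 < k.1 from hpk), if_pos (show p.1 < i.1 from hpi)]
        ring
      · rw [Rcoeff_of_lt hik, Rcoeff_self, if_pos rfl, if_neg hik.ne',
          if_pos (show p.1 < k.1 from hik), if_neg (lt_irrefl _)]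
        ring
      rcases lt_trichotomy p k with hpk | rfl | hpk
      · rw [Rcoeff_of_lt hpk, Rcoeff_of_gt hpi, if_neg hpi.ne, if_neg hpk.ne',
          if_pos (show p.1 < k.1 from hpk), if_neg (show ¬ p.1 < i.1 by omega)]
        ring
      · rw [Rcoeff_self, Rcoeff_of_gt hpi, if_neg hpi.ne, if_pos rfl, if_neg (lt_irrefl _),
          if_neg (show ¬ p.1 < i.1 by omega)]
        ring
      · simp [Rcoeff_of_gt hpk, hpi.ne, hpk.ne, show ¬ p.1 < k.1 by omega,
          show ¬ p.1 < i.1 by omega]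
    simp only [mul_assoc, h, ← mul_sum]
    rw [sum_add_distrib, sum_sub_distrib, sum_sub_distrib, sum_ite_eq, sum_ite_eq,
      if_pos (mem_univ _), if_pos (mem_univ _), sum_lt_sub_inv_mul_D_inv hq k.isLt.le,
      sum_lt_sub_inv_mul_D_inv hq i.isLt.le]
    simp only [kron, if_neg hik.ne, D_eq_pow, inv_pow]
    field_simp
    ring
  · have h (p : Fin N) : D N q i * (D N q p)⁻¹ * (Rcoeff q p i * (Rcoeff q p i - (q - q⁻¹))) =
        if i = p then 1 else 0 := by
      rcases lt_trichotomy p i with hpi | rfl | hpi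
      · simp [Rcoeff_of_lt hpi, hpi.ne']
      · rw [Rcoeff_self, if_pos rfl, sub_sub_cancel, mul_inv_cancel₀ (D_ne_zero hq p),
          mul_inv_cancel₀ hq, one_mul]
      · simp [Rcoeff_of_gt hpi, hpi.ne]
    simp [h, kron]
  · refine (sum_eq_zero fun p _ => ?_).trans (if_neg hki.ne').symm
    rcases le_or_gt p k with hpk | hkp
    · simp [Rcoeff_of_lt (hpk.trans_lt hki)]
    · simp [Rcoeff_of_gt hkp]

theorem sum_Rinv_mul_D (hq : q ≠ 0) (t y : Fin N) :
    ∑ n, Rinv N q t n y n * D N q n = q * kron t y := by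
  simp only [Rinv_diag_right, mul_right_comm _ (kron t y), ← sum_mul, sum_Rcoeff_sub_mul_D hq]

theorem sum_D_inv_mul_Rhat (hq : q ≠ 0) (k j : Fin N) :
    ∑ x, (D N q x)⁻¹ * Rhat N q x k x j = q⁻¹ * kron k j := by
  simp only [Rhat_diag_left, ← mul_assoc, ← sum_mul, sum_D_inv_mul_Rcoeff hq]

theorem sum_D_mul_Rhat_mul_Rinv (hq : q ≠ 0) (i j k l : Fin N) :
    ∑ x, ∑ p, D N q k * (D N q x)⁻¹ * Rhat N q p k x j * Rinv N q x i p l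
      = kron i j * kron k l := by
  have collapse : ∑ x, ∑ p, D N q k * (D N q x)⁻¹ * Rhat N q p k x j * Rinv N q x i p l
      = kron k j * ∑ x, D N q k * (D N q x)⁻¹ * Rcoeff q x k * Rinv N q x i x l
        + (1 - kron j k) * Rinv N q k i j l := by
    simp [Rhat_eq_Rcoeff, kron, add_mul, mul_add, sum_add_distrib, mul_sum,
      mul_inv_cancel₀ (D_ne_zero hq k)]
  have diag : ∑ x, D N q k * (D N q x)⁻¹ * Rcoeff q x k * Rinv N q x i x l
      = kron i k * kron i l := by
    simp only [Rinv_diag_left, ← sum_D_mul_Rcoeff_mul_Rcoeff_sub hq i k, sum_mul]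
    exact sum_congr rfl fun x _ => by ring
  rw [collapse, diag, Rinv_eq_Rcoeff]
  rcases eq_or_ne j k with rfl | hjk <;> rcases eq_or_ne i j with rfl | hij
  · simp [kron]
  · simp [kron, hij]
  · simp [kron, hjk, hjk.symm]
  · simp [kron, hij, hjk.symm]

theorem sum_sigmaMinus_mul_D (hq : q ≠ 0) (i j k l : Fin N) :
    ∑ m, ∑ n, sigmaMinus N q m n n m i j k l * D N q n = D N q j * kron j k * kron i l := by
  have collapse_y (t m p : Fin N) :
      ∑ y, Rinv N q y m p l * (q * kron t y) = q * Rinv N q t m p l := by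
    simp [kron, mul_comm]
  calc ∑ m, ∑ n, sigmaMinus N q m n n m i j k l * D N q n
      = ∑ x, ∑ p, D N q k * (D N q x)⁻¹ * Rhat N q p k x j * ∑ t, ∑ m, Rhat N q x i t m *
          ∑ y, Rinv N q y m p l * ∑ n, Rinv N q t n y n * D N q n := by
        simp only [sigmaMinus, sum_mul, mul_sum]
        conv_lhs =>
          enter [2, m]; rw [sum_comm]; enter [2, x]; rw [sum_comm]
          enter [2, p]; rw [sum_comm]; enter [2, t]; rw [sum_comm]
        conv_lhs =>
          rw [sum_comm]; enter [2, x]; rw [sum_comm]; enter [2, p]; rw [sum_comm]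
        ac_rfl
    _ = ∑ x, ∑ p, D N q k * (D N q x)⁻¹ * Rhat N q p k x j *
          ∑ t, ∑ m, Rhat N q x i t m * (q * Rinv N q t m p l) := by
        simp only [sum_Rinv_mul_D hq, collapse_y]
    _ = ∑ x, ∑ p, D N q k * (D N q x)⁻¹ * Rhat N q p k x j * (q * (kron x p * kron i l)) := by
        simp only [mul_left_comm _ q, ← mul_sum, sum_Rhat_mul_Rinv hq]
    _ = ∑ x, D N q k * (D N q x)⁻¹ * Rhat N q x k x j * (q * kron i l) := by
        refine sum_congr rfl fun x _ => ?_
        simp [kron]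
    _ = q * kron i l * D N q k * ∑ x, (D N q x)⁻¹ * Rhat N q x k x j := by
        rw [mul_sum]
        exact sum_congr rfl fun x _ => by ring
    _ = D N q j * kron j k * kron i l := by
        rw [sum_D_inv_mul_Rhat hq]
        rcases eq_or_ne k j with rfl | hkj
        · field_simp
        · simp [kron, hkj, hkj.symm]

theorem sum_sigmaMinus_trace (hq : q ≠ 0) (i j k l : Fin N) :
    ∑ m, ∑ r, sigmaMinus N q m m r r i j k l = kron i j * kron k l := by
  calc ∑ m, ∑ r, sigmaMinus N q m m r r i j k l
      = ∑ r, ∑ x, ∑ p, ∑ y, D N q k * (D N q x)⁻¹ * Rhat N q p k x j * Rinv N q y r p l *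
          ∑ t, ∑ m, Rhat N q x i t m * Rinv N q t m y r := by
        simp only [sigmaMinus, mul_sum]
        conv_lhs => enter [2, m, 2, r, 2, x, 2, p]; rw [sum_comm]
        conv_lhs =>
          rw [sum_comm]; enter [2, r]; rw [sum_comm]; enter [2, x]; rw [sum_comm]
          enter [2, p]; rw [sum_comm]; enter [2, y]; rw [sum_comm]
        ac_rfl
    _ = ∑ x, ∑ p, D N q k * (D N q x)⁻¹ * Rhat N q p k x j * Rinv N q x i p l := by
        simp [sum_Rhat_mul_Rinv hq, kron]
    _ = kron i j * kron k l := sum_D_mul_Rhat_mul_Rinv hq i j k l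

theorem G_apply (α β : ℂ) (m n r s : Fin N) :
    G N q α β (m, n) (r, s) = α * D N q n * kron m s * kron n r + β * kron m n * kron r s := by
  simp only [G, D, Matrix.of_apply]
  ring

end

theorem sigmaMinus_symmetric_metric_general (N : ℕ) (q : ℂ) (hq : q ≠ 0)
    (α β : ℂ) (i j k l : Fin N) :
    ∑ m : Fin N, ∑ n : Fin N, ∑ r : Fin N, ∑ s : Fin N,
      sigmaMinus N q m n r s i j k l * G N q α β (m, n) (r, s)
      = G N q α β (i, j) (k, l) := by
  have hα : ∑ m, ∑ n, ∑ r, ∑ s,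
      sigmaMinus N q m n r s i j k l * (α * D N q n * kron m s * kron n r)
      = α * ∑ m, ∑ n, sigmaMinus N q m n n m i j k l * D N q n := by
    simp only [kron, mul_ite, mul_one, mul_zero, sum_ite_irrel, sum_ite_eq, mem_univ, if_true,
      sum_const_zero, mul_sum]
    ac_rfl
  have hβ : ∑ m, ∑ n, ∑ r, ∑ s, sigmaMinus N q m n r s i j k l * (β * kron m n * kron r s)
      = β * ∑ m, ∑ r, sigmaMinus N q m m r r i j k l := by
    simp only [kron, mul_ite, mul_one, mul_zero, sum_ite_irrel, sum_ite_eq, mem_univ, if_true,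
      sum_const_zero, mul_sum]
    ac_rfl
  simp only [G_apply, mul_add, sum_add_distrib, hα, hβ, sum_sigmaMinus_mul_D hq,
    sum_sigmaMinus_trace hq]
  ring

/-- Every invariant metric on `Γ_{−,z}` is symmetric with respect to the braiding:
`Σ_{m,n,r,s} σ^{mnrs}_{ijkl} G_{(mn),(rs)} = G_{(ij),(kl)}`. -/
theorem sigmaMinus_symmetric_metric (N : ℕ) (hN : 2 ≤ N) (q : ℂ) (hq : q ≠ 0)
    (α β : ℂ) (i j k l : Fin N) :
    ∑ m : Fin N, ∑ n : Fin N, ∑ r : Fin N, ∑ s : Fin N,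
      sigmaMinus N q m n r s i j k l * G N q α β (m, n) (r, s)
      = G N q α β (i, j) (k, l) :=
  sigmaMinus_symmetric_metric_general N q hq α β i j k l

end Stmt5
end

section
/- Let N ≥ 2 be an integer, q ∈ ℂ nonzero and not a root of unity (so in particular Q = q − q⁻¹ ≠ 0), and α, β ∈ ℂ with α ≠ 0 and α + 𝔰β ≠ 0. Then there exists a unique tuple (λ₁,…,λ₆) ∈ ℂ⁶ satisfying the five conditions: (T) Qλ₃ = Qλ₄ = Q + qλ₅ − (Q² + 1)λ₆; (M1) λ₄ + Qλ₆ = 0; (M2) λ₅ + q⁻¹λ₆ = 0; (M3) αλ₂ + (α + 𝔰β)λ₃ = 0; (M4) (α + 𝔰β)λ₁ + βλ₂ + βλ₄ + q^{2N} Q (β + qQα) λ₆ = 0. The unique solution is λ₁ = −q^{2N+1}Q³/2 − Q²β/(2α), λ₂ = Q²(α + 𝔰β)/(2α), λ₃ = λ₄ = −Q²/2, λ₅ = −Q/(2q), λ₆ = Q/2. -/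
/-!
With `Q = q − q⁻¹`, (T), (M1) and (M2) force `2λ₆ = Q`, which determines `λ₅`, `λ₄` and, as
`Q ≠ 0`, `λ₃`; then (M3) and (M4) are linear in `λ₂` and `λ₁` with the nonzero leading
coefficients `α` and `α + 𝔰β`. The value of `𝔰` enters only through the geometric-sum identity
`𝔰 Q q^{2N+1} = q^{2N} − 1`.
-/

open scoped BigOperators

namespace Stmt6

/-- `𝔰 = Σ_{i=1}^{N} q^{−2i}`. -/
noncomputable def sconst (N : ℕ) (q : ℂ) : ℂ := ∑ i : Fin N, q ^ (-(2 * ((i.1 : ℤ) + 1)))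

lemma sub_inv_ne_zero_of_sq_ne_one {K : Type*} [Field K] {q : K} (hq0 : q ≠ 0)
    (hq2 : q ^ 2 ≠ 1) : q - q⁻¹ ≠ 0 := by
  intro h
  apply hq2
  linear_combination q * h + mul_inv_cancel₀ hq0

lemma sconst_mul_sub_inv_mul_pow (N : ℕ) {q : ℂ} (hq0 : q ≠ 0) :
    sconst N q * (q - q⁻¹) * q ^ (2 * N + 1) = q ^ (2 * N) - 1 := by
  induction N with
  | zero => simp [sconst]
  | succ n ih =>
    have hsucc : sconst (n + 1) q = sconst n q + (q ^ (2 * n + 2))⁻¹ := by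
      simp only [sconst, Fin.sum_univ_castSucc, Fin.val_castSucc, Fin.val_last, zpow_neg]
      norm_cast
    rw [hsucc]
    field_simp
    field_simp at ih
    linear_combination q ^ (2 * n + 4) * ih

section System

variable {K : Type*} [Field K]

/-- The torsion condition (T) is the first two conjuncts, followed by (M1)–(M4); `l i` is `λᵢ₊₁`
and `s` stands for `𝔰`. -/
def LeviCivitaEquations (N : ℕ) (q α β s : K) (l : Fin 6 → K) : Prop :=
  (q - q⁻¹) * l 2 = (q - q⁻¹) * l 3 ∧
    (q - q⁻¹) * l 3 = (q - q⁻¹) + q * l 4 - ((q - q⁻¹) ^ 2 + 1) * l 5 ∧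
    l 3 + (q - q⁻¹) * l 5 = 0 ∧
    l 4 + q⁻¹ * l 5 = 0 ∧
    α * l 1 + (α + s * β) * l 2 = 0 ∧
    (α + s * β) * l 0 + β * l 1 + β * l 3 +
      q ^ (2 * N) * (q - q⁻¹) * (β + q * (q - q⁻¹) * α) * l 5 = 0

def leviCivitaCoeffs (N : ℕ) (q α β s : K) : Fin 6 → K :=
  ![-(q ^ (2 * N + 1) * (q - q⁻¹) ^ 3) / 2 - (q - q⁻¹) ^ 2 * β / (2 * α),
    (q - q⁻¹) ^ 2 * (α + s * β) / (2 * α),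
    -((q - q⁻¹) ^ 2) / 2,
    -((q - q⁻¹) ^ 2) / 2,
    -(q - q⁻¹) / (2 * q),
    (q - q⁻¹) / 2]

variable [CharZero K] {N : ℕ} {q α β s : K}

theorem LeviCivitaEquations.eq_leviCivitaCoeffs (hq0 : q ≠ 0) (hQ : q - q⁻¹ ≠ 0) (hα : α ≠ 0)
    (hαβ : α + s * β ≠ 0) (hs : s * (q - q⁻¹) * q ^ (2 * N + 1) = q ^ (2 * N) - 1)
    {l : Fin 6 → K} (h : LeviCivitaEquations N q α β s l) : l = leviCivitaCoeffs N q α β s := by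
  obtain ⟨hT₁, hT₂, hM₁, hM₂, hM₃, hM₄⟩ := h
  have hqi : q * q⁻¹ = 1 := mul_inv_cancel₀ hq0
  have e5 : l 5 = (q - q⁻¹) / 2 := by
    linear_combination (1 / 2 : K) * hT₂ - ((q - q⁻¹) / 2) * hM₁ + (q / 2) * hM₂ - (l 5 / 2) * hqi
  have e4 : l 4 = -(q - q⁻¹) / (2 * q) := by
    rw [e5] at hM₂
    field_simp at hM₂ ⊢
    linear_combination hM₂
  have e3 : l 3 = -((q - q⁻¹) ^ 2) / 2 := by
    rw [e5] at hM₁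
    linear_combination hM₁
  have e2 : l 2 = -((q - q⁻¹) ^ 2) / 2 := by
    rw [e3] at hT₁
    exact mul_left_cancel₀ hQ hT₁
  have e1 : l 1 = (q - q⁻¹) ^ 2 * (α + s * β) / (2 * α) := by
    rw [e2] at hM₃
    field_simp at hM₃ ⊢
    linear_combination hM₃
  have e0 : l 0 = -(q ^ (2 * N + 1) * (q - q⁻¹) ^ 3) / 2 - (q - q⁻¹) ^ 2 * β / (2 * α) := by
    rw [e1, e3, e5] at hM₄
    refine mul_left_cancel₀ hαβ ?_
    linear_combination hM₄ + (β * (q - q⁻¹) ^ 2 / 2) * hs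
  ext i
  fin_cases i <;> assumption

theorem leviCivitaEquations_leviCivitaCoeffs (hq0 : q ≠ 0) (hα : α ≠ 0)
    (hs : s * (q - q⁻¹) * q ^ (2 * N + 1) = q ^ (2 * N) - 1) :
    LeviCivitaEquations N q α β s (leviCivitaCoeffs N q α β s) := by
  have hqi : q * q⁻¹ = 1 := mul_inv_cancel₀ hq0
  simp only [LeviCivitaEquations, leviCivitaCoeffs, Matrix.cons_val]
  refine ⟨trivial, ?_, ?_, ?_, ?_, ?_⟩
  · linear_combination ((q - q⁻¹) / 2) * hqi
  · ring
  · field_simp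
    ring
  · field_simp
    ring
  · linear_combination (-(β * (q - q⁻¹) ^ 2 / 2)) * hs

theorem leviCivitaEquations_iff (hq0 : q ≠ 0) (hQ : q - q⁻¹ ≠ 0) (hα : α ≠ 0)
    (hαβ : α + s * β ≠ 0) (hs : s * (q - q⁻¹) * q ^ (2 * N + 1) = q ^ (2 * N) - 1)
    (l : Fin 6 → K) : LeviCivitaEquations N q α β s l ↔ l = leviCivitaCoeffs N q α β s :=
  ⟨(·.eq_leviCivitaCoeffs hq0 hQ hα hαβ hs),
    fun h => h ▸ leviCivitaEquations_leviCivitaCoeffs hq0 hα hs⟩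

end System

theorem levi_civita_system_plus_general (N : ℕ) (q : ℂ) (hq0 : q ≠ 0)
    (hq : ∀ n : ℕ, 0 < n → q ^ n ≠ 1) (α β : ℂ) (hα : α ≠ 0)
    (hαβ : α + sconst N q * β ≠ 0) :
    ∀ l : Fin 6 → ℂ,
      ((q - q⁻¹) * l 2 = (q - q⁻¹) * l 3 ∧
        (q - q⁻¹) * l 3 = (q - q⁻¹) + q * l 4 - ((q - q⁻¹) ^ 2 + 1) * l 5 ∧
        l 3 + (q - q⁻¹) * l 5 = 0 ∧
        l 4 + q⁻¹ * l 5 = 0 ∧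
        α * l 1 + (α + sconst N q * β) * l 2 = 0 ∧
        (α + sconst N q * β) * l 0 + β * l 1 + β * l 3 +
          q ^ (2 * N) * (q - q⁻¹) * (β + q * (q - q⁻¹) * α) * l 5 = 0) ↔
      l = ![-(q ^ (2 * N + 1) * (q - q⁻¹) ^ 3) / 2 - (q - q⁻¹) ^ 2 * β / (2 * α),
            (q - q⁻¹) ^ 2 * (α + sconst N q * β) / (2 * α),
            -((q - q⁻¹) ^ 2) / 2,
            -((q - q⁻¹) ^ 2) / 2,
            -(q - q⁻¹) / (2 * q),
            (q - q⁻¹) / 2] :=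
  leviCivitaEquations_iff hq0 (sub_inv_ne_zero_of_sq_ne_one hq0 (hq 2 two_pos)) hα hαβ
    (sconst_mul_sub_inv_mul_pow N hq0)

/-- The torsion and metric-compatibility equations for a bicovariant connection on the
calculus `Γ_{+,z}` on `SL_q(N)` have a unique solution `(λ₁,…,λ₆)`, which is given
explicitly (here `l 0 = λ₁, …, l 5 = λ₆`, `Q = q − q⁻¹`, `𝔰 = Σ_{i=1}^{N} q^{−2i}`). -/
theorem levi_civita_system_plus (N : ℕ) (hN : 2 ≤ N) (q : ℂ) (hq0 : q ≠ 0)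
    (hq : ∀ n : ℕ, 0 < n → q ^ n ≠ 1) (α β : ℂ) (hα : α ≠ 0)
    (hαβ : α + sconst N q * β ≠ 0) :
    ∀ l : Fin 6 → ℂ,
      ((q - q⁻¹) * l 2 = (q - q⁻¹) * l 3 ∧
        (q - q⁻¹) * l 3 = (q - q⁻¹) + q * l 4 - ((q - q⁻¹) ^ 2 + 1) * l 5 ∧
        l 3 + (q - q⁻¹) * l 5 = 0 ∧
        l 4 + q⁻¹ * l 5 = 0 ∧
        α * l 1 + (α + sconst N q * β) * l 2 = 0 ∧
        (α + sconst N q * β) * l 0 + β * l 1 + β * l 3 +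
          q ^ (2 * N) * (q - q⁻¹) * (β + q * (q - q⁻¹) * α) * l 5 = 0) ↔
      l = ![-(q ^ (2 * N + 1) * (q - q⁻¹) ^ 3) / 2 - (q - q⁻¹) ^ 2 * β / (2 * α),
            (q - q⁻¹) ^ 2 * (α + sconst N q * β) / (2 * α),
            -((q - q⁻¹) ^ 2) / 2,
            -((q - q⁻¹) ^ 2) / 2,
            -(q - q⁻¹) / (2 * q),
            (q - q⁻¹) / 2] :=
  levi_civita_system_plus_general N q hq0 hq α β hα hαβ

end Stmt6
end

section
/- Let N ≥ 2 be an integer, q ∈ ℂ nonzero and not a root of unity (so in particular Q = q − q⁻¹ ≠ 0), and α, β ∈ ℂ with α ≠ 0 and α + 𝔰β ≠ 0. Then there exists a unique tuple (λ₁,…,λ₆) ∈ ℂ⁶ satisfying the five conditions: (T) Qλ₃ = Qλ₄ = Q − q^{2N+1}λ₅ + λ₆; (M1) λ₄ = 0; (M2) λ₅ + q^{−2N−1}λ₆ = 0; (M3) (α + 𝔰β)λ₁ + βλ₂ + (q^{2N+1}Q²α + q^{2N}Qβ)λ₆ = 0; (M4) αλ₂ + (α + 𝔰β)λ₃ + (−q^{2N+1}Qα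 + β)λ₅ + (Qα + q⁻¹β)λ₆ = 0. The unique solution is λ₁ = q^{2N+1}Q³/2 − Q²β/(2α), λ₂ = Q²(2α + 𝔰β)/(2α), λ₃ = λ₄ = 0, λ₅ = q^{−2N−1}Q/2, λ₆ = −Q/2. -/
/-!
The system is triangular with pivots `Q`, `2`, `α` and `α + 𝔰β`, all nonzero, so it has at most
one solution. That the displayed tuple solves it comes down to the geometric sum
`(q² − 1) q^{2N} 𝔰 = q^{2N} − 1`.
-/

open scoped BigOperators

namespace Stmt7

/-- `𝔰 = Σ_{i=1}^{N} q^{−2i}`. -/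
noncomputable def sconst (N : ℕ) (q : ℂ) : ℂ := ∑ i : Fin N, q ^ (-(2 * ((i.1 : ℤ) + 1)))

lemma sub_inv_ne_zero_of_sq_ne_one {K : Type*} [Field K] {q : K} (hq : q ≠ 0)
    (hq₂ : q ^ 2 ≠ 1) : q - q⁻¹ ≠ 0 := by
  rwa [sub_ne_zero, ne_eq, ← mul_eq_one_iff_eq_inv₀ hq, ← sq]

lemma zpow_neg_two_mul_add_one {K : Type*} [DivisionRing K] (q : K) (N : ℕ) :
    q ^ (-(2 * (N : ℤ) + 1)) = (q ^ (2 * N + 1))⁻¹ := by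
  rw [zpow_neg, ← zpow_natCast]
  push_cast
  rfl

lemma pow_mul_sconst (N : ℕ) {q : ℂ} (hq : q ≠ 0) :
    q ^ (2 * N) * sconst N q = ∑ i ∈ Finset.range N, (q ^ 2) ^ i := by
  rw [sconst, Finset.mul_sum,
    Fin.sum_univ_eq_sum_range (fun i => q ^ (2 * N) * q ^ (-(2 * ((i : ℤ) + 1)))),
    ← Finset.sum_range_reflect]
  refine Finset.sum_congr rfl fun i hi => ?_
  rw [Finset.mem_range] at hi
  rw [← zpow_natCast, ← zpow_add₀ hq, ← pow_mul, ← zpow_natCast]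
  congr 1
  push_cast [Nat.sub_sub, Nat.cast_sub (show 1 + i ≤ N by omega)]
  ring

lemma sq_sub_one_mul_pow_mul_sconst (N : ℕ) {q : ℂ} (hq : q ≠ 0) :
    (q ^ 2 - 1) * q ^ (2 * N) * sconst N q = q ^ (2 * N) - 1 := by
  rw [mul_assoc, pow_mul_sconst N hq, mul_comm, geom_sum_mul, pow_mul]

/-- The equations (T) and (M1)–(M4), with `l 0 = λ₁, …, l 5 = λ₆`. -/
def LeviCivitaSystem (N : ℕ) (q α β : ℂ) (l : Fin 6 → ℂ) : Prop :=
  (q - q⁻¹) * l 2 = (q - q⁻¹) * l 3 ∧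
    (q - q⁻¹) * l 3 = (q - q⁻¹) - q ^ (2 * N + 1) * l 4 + l 5 ∧
    l 3 = 0 ∧
    l 4 + q ^ (-(2 * (N : ℤ) + 1)) * l 5 = 0 ∧
    (α + sconst N q * β) * l 0 + β * l 1 +
      (q ^ (2 * N + 1) * (q - q⁻¹) ^ 2 * α + q ^ (2 * N) * (q - q⁻¹) * β) * l 5 = 0 ∧
    α * l 1 + (α + sconst N q * β) * l 2 +
      (-(q ^ (2 * N + 1)) * (q - q⁻¹) * α + β) * l 4 +
      ((q - q⁻¹) * α + q⁻¹ * β) * l 5 = 0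

noncomputable def leviCivitaSolution (N : ℕ) (q α β : ℂ) : Fin 6 → ℂ :=
  ![q ^ (2 * N + 1) * (q - q⁻¹) ^ 3 / 2 - (q - q⁻¹) ^ 2 * β / (2 * α),
    (q - q⁻¹) ^ 2 * (2 * α + sconst N q * β) / (2 * α),
    0,
    0,
    q ^ (-(2 * (N : ℤ) + 1)) * (q - q⁻¹) / 2,
    -(q - q⁻¹) / 2]

lemma leviCivitaSystem_leviCivitaSolution {N : ℕ} {q α : ℂ} (hq : q ≠ 0) (hα : α ≠ 0) (β : ℂ) :
    LeviCivitaSystem N q α β (leviCivitaSolution N q α β) := by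
  have hs := sq_sub_one_mul_pow_mul_sconst N hq
  simp only [LeviCivitaSystem, leviCivitaSolution, Matrix.cons_val, zpow_neg_two_mul_add_one,
    pow_succ q (2 * N)]
  refine ⟨trivial, ?_, trivial, ?_, ?_, ?_⟩
  · field_simp
    ring
  · ring
  · field_simp
    linear_combination α * β * (q ^ 2 - 1) ^ 2 * hs
  · field_simp
    linear_combination β * (q ^ 2 - 1) * hs

lemma LeviCivitaSystem.eq {N : ℕ} {q α β : ℂ} {l l' : Fin 6 → ℂ} (hq : q ≠ 0)
    (hQ : q - q⁻¹ ≠ 0) (hα : α ≠ 0) (hαβ : α + sconst N q * β ≠ 0)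
    (h : LeviCivitaSystem N q α β l) (h' : LeviCivitaSystem N q α β l') : l = l' := by
  obtain ⟨hT₁, hT₂, hM₁, hM₂, hM₃, hM₄⟩ := h
  obtain ⟨hT₁', hT₂', hM₁', hM₂', hM₃', hM₄'⟩ := h'
  have hR : q ^ (2 * N + 1) * (q ^ (2 * N + 1))⁻¹ = 1 := mul_inv_cancel₀ (pow_ne_zero _ hq)
  rw [zpow_neg_two_mul_add_one] at hM₂ hM₂'
  have e₃ : l 3 = l' 3 := hM₁.trans hM₁'.symm
  have e₂ : l 2 = l' 2 := mul_left_cancel₀ hQ (by rw [hT₁, hT₁', e₃])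
  have e₅₄ : l 5 - l' 5 = q ^ (2 * N + 1) * (l 4 - l' 4) := by
    linear_combination hT₂' - hT₂ + (q - q⁻¹) * (hM₁ - hM₁')
  have e₄ : l 4 = l' 4 := by
    linear_combination (hM₂ - hM₂' - (q ^ (2 * N + 1))⁻¹ * e₅₄ - (l 4 - l' 4) * hR) / 2
  have e₅ : l 5 = l' 5 := by linear_combination e₅₄ + q ^ (2 * N + 1) * e₄
  rw [e₂, e₄, e₅] at hM₄
  have e₁ : l 1 = l' 1 := mul_left_cancel₀ hα (by linear_combination hM₄ - hM₄')
  rw [e₁, e₅] at hM₃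
  have e₀ : l 0 = l' 0 := mul_left_cancel₀ hαβ (by linear_combination hM₃ - hM₃')
  ext i
  fin_cases i <;> assumption

theorem levi_civita_system_minus_general (N : ℕ) (q : ℂ) (hq0 : q ≠ 0)
    (hq : ∀ n : ℕ, 0 < n → q ^ n ≠ 1) (α β : ℂ) (hα : α ≠ 0)
    (hαβ : α + sconst N q * β ≠ 0) :
    ∀ l : Fin 6 → ℂ,
      ((q - q⁻¹) * l 2 = (q - q⁻¹) * l 3 ∧
        (q - q⁻¹) * l 3 = (q - q⁻¹) - q ^ (2 * N + 1) * l 4 + l 5 ∧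
        l 3 = 0 ∧
        l 4 + q ^ (-(2 * (N : ℤ) + 1)) * l 5 = 0 ∧
        (α + sconst N q * β) * l 0 + β * l 1 +
          (q ^ (2 * N + 1) * (q - q⁻¹) ^ 2 * α + q ^ (2 * N) * (q - q⁻¹) * β) * l 5 = 0 ∧
        α * l 1 + (α + sconst N q * β) * l 2 +
          (-(q ^ (2 * N + 1)) * (q - q⁻¹) * α + β) * l 4 +
          ((q - q⁻¹) * α + q⁻¹ * β) * l 5 = 0) ↔
      l = ![q ^ (2 * N + 1) * (q - q⁻¹) ^ 3 / 2 - (q - q⁻¹) ^ 2 * β / (2 * α),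
            (q - q⁻¹) ^ 2 * (2 * α + sconst N q * β) / (2 * α),
            0,
            0,
            q ^ (-(2 * (N : ℤ) + 1)) * (q - q⁻¹) / 2,
            -(q - q⁻¹) / 2] := by
  intro l
  have hQ : q - q⁻¹ ≠ 0 := sub_inv_ne_zero_of_sq_ne_one hq0 (hq 2 two_pos)
  have hsol := leviCivitaSystem_leviCivitaSolution (N := N) hq0 hα β
  refine ⟨fun h => LeviCivitaSystem.eq hq0 hQ hα hαβ h hsol, ?_⟩
  rintro rfl
  exact hsol

/-- The torsion and metric-compatibility equations for a bicovariant connection on the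
calculus `Γ_{−,z}` on `SL_q(N)` have a unique solution `(λ₁,…,λ₆)`, which is given
explicitly (here `l 0 = λ₁, …, l 5 = λ₆`, `Q = q − q⁻¹`, `𝔰 = Σ_{i=1}^{N} q^{−2i}`). -/
theorem levi_civita_system_minus (N : ℕ) (hN : 2 ≤ N) (q : ℂ) (hq0 : q ≠ 0)
    (hq : ∀ n : ℕ, 0 < n → q ^ n ≠ 1) (α β : ℂ) (hα : α ≠ 0)
    (hαβ : α + sconst N q * β ≠ 0) :
    ∀ l : Fin 6 → ℂ,
      ((q - q⁻¹) * l 2 = (q - q⁻¹) * l 3 ∧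
        (q - q⁻¹) * l 3 = (q - q⁻¹) - q ^ (2 * N + 1) * l 4 + l 5 ∧
        l 3 = 0 ∧
        l 4 + q ^ (-(2 * (N : ℤ) + 1)) * l 5 = 0 ∧
        (α + sconst N q * β) * l 0 + β * l 1 +
          (q ^ (2 * N + 1) * (q - q⁻¹) ^ 2 * α + q ^ (2 * N) * (q - q⁻¹) * β) * l 5 = 0 ∧
        α * l 1 + (α + sconst N q * β) * l 2 +
          (-(q ^ (2 * N + 1)) * (q - q⁻¹) * α + β) * l 4 +
          ((q - q⁻¹) * α + q⁻¹ * β) * l 5 = 0) ↔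
      l = ![q ^ (2 * N + 1) * (q - q⁻¹) ^ 3 / 2 - (q - q⁻¹) ^ 2 * β / (2 * α),
            (q - q⁻¹) ^ 2 * (2 * α + sconst N q * β) / (2 * α),
            0,
            0,
            q ^ (-(2 * (N : ℤ) + 1)) * (q - q⁻¹) / 2,
            -(q - q⁻¹) / 2] :=
  levi_civita_system_minus_general N q hq0 hq α β hα hαβ

end Stmt7
end

section
/- Let N ≥ 2 be an integer, q ∈ ℝ with q > 0 and q ≠ 1, and α, β ∈ ℝ with α ≠ 0 and α + 𝔰β ≠ 0. Then the set S = { (λ₁,…,λ₆) ∈ ℝ⁶ : Qλ₃ = Qλ₄ = qλ₅ − (Q² + 1)λ₆ + Q and λ₂α − λ₃(α + 𝔰β) − λ₅β − q⁻¹λ₆β = 0 } is an affine subspace of ℝ⁶ of dimension 3. In particular, for the alternative notion of compatibility of a connection with a metric introduced in Appendix B, the Levi-Civita connections on Γ_{±,z} over SU_q(N) with real coefficients form a three-parameter family and are not unique. -/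
/-! The torsion and compatibility conditions are three linear equations in `λ`. They are
independent: `λ₂` occurs only in the compatibility equation, with coefficient `α ≠ 0`; `λ₅` occurs
in the second torsion equation with coefficient `q ≠ 0` and not in the first; and the first has
coefficient `q - q⁻¹ ≠ 0`. So the solutions form a fibre of a surjective linear map `ℝ⁶ → ℝ³`,
an affine subspace of dimension `6 - 3`. -/

open scoped BigOperators

namespace Stmt11

/-- `𝔰 = Σ_{i=1}^{N} q^{−2i}` (real). -/
noncomputable def sconst (N : ℕ) (q : ℝ) : ℝ := ∑ i : Fin N, q ^ (-(2 * ((i.1 : ℤ) + 1)))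

open Module

theorem AffineSubspace.exists_coe_eq_preimage_singleton {K V W : Type*} [DivisionRing K]
    [AddCommGroup V] [Module K V] [FiniteDimensional K V] [AddCommGroup W] [Module K W]
    (f : V →ₗ[K] W) (hf : Function.Surjective f) (c : W) :
    ∃ A : AffineSubspace K V, (A : Set V) = f ⁻¹' {c} ∧
      finrank K A.direction + finrank K W = finrank K V := by
  obtain ⟨p, rfl⟩ := hf c
  refine ⟨AffineSubspace.mk' p (LinearMap.ker f), ?_, ?_⟩
  · ext l
    simp [vsub_eq_sub, sub_eq_zero]
  · rw [AffineSubspace.direction_mk', add_comm, ← f.finrank_range_add_finrank_ker,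
      LinearMap.range_eq_top.mpr hf, finrank_top]

theorem sub_inv_ne_zero_of_pos {q : ℝ} (hq0 : 0 < q) (hq1 : q ≠ 1) : q - q⁻¹ ≠ 0 := by
  intro h
  have : (q - 1) * (q + 1) = 0 := by field_simp at h; linear_combination h
  rcases mul_eq_zero.mp this with h | h
  · exact hq1 (sub_eq_zero.mp h)
  · linarith

/-- Torsion-freeness and compatibility say that `l` lies in the fibre over `(0, q - q⁻¹, 0)`. -/
noncomputable def torsionCompatibilityMap (q α β s : ℝ) : (Fin 6 → ℝ) →ₗ[ℝ] ℝ × ℝ × ℝ where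
  toFun l := ((q - q⁻¹) * l 2 - (q - q⁻¹) * l 3,
    (q - q⁻¹) * l 3 - (q * l 4 - ((q - q⁻¹) ^ 2 + 1) * l 5),
    l 1 * α - l 2 * (α + s * β) - l 4 * β - q⁻¹ * l 5 * β)
  map_add' x y := by simp only [Pi.add_apply, Prod.mk_add_mk]; ext <;> ring
  map_smul' c x := by
    simp only [Pi.smul_apply, smul_eq_mul, RingHom.id_apply, Prod.smul_mk]
    ext <;> ring

theorem torsionCompatibilityMap_surjective {q α β s : ℝ} (hq : q ≠ 0) (hQ : q - q⁻¹ ≠ 0)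
    (hα : α ≠ 0) : Function.Surjective (torsionCompatibilityMap q α β s) := by
  rintro ⟨a, b, c⟩
  refine ⟨![0, (c + a / (q - q⁻¹) * (α + s * β) - b / q * β) / α, a / (q - q⁻¹), 0, -b / q, 0], ?_⟩
  simp only [torsionCompatibilityMap, LinearMap.coe_mk, AddHom.coe_mk, Matrix.cons_val,
    Prod.mk.injEq]
  refine ⟨by simp [mul_div_cancel₀ _ hQ], ?_, ?_⟩ <;> field_simp <;> ring

theorem appendixB_levi_civita_three_parameters_general (N : ℕ)
    (q : ℝ) (hq0 : 0 < q) (hq1 : q ≠ 1) (α β : ℝ) (hα : α ≠ 0) :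
    ∃ A : AffineSubspace ℝ (Fin 6 → ℝ),
      (A : Set (Fin 6 → ℝ)) =
        {l : Fin 6 → ℝ |
          (q - q⁻¹) * l 2 = (q - q⁻¹) * l 3 ∧
          (q - q⁻¹) * l 3 = q * l 4 - ((q - q⁻¹) ^ 2 + 1) * l 5 + (q - q⁻¹) ∧
          l 1 * α - l 2 * (α + sconst N q * β) - l 4 * β - q⁻¹ * l 5 * β = 0} ∧
      Module.finrank ℝ A.direction = 3 := by
  have hQ := sub_inv_ne_zero_of_pos hq0 hq1
  obtain ⟨A, hA, hdim⟩ := AffineSubspace.exists_coe_eq_preimage_singleton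
    (torsionCompatibilityMap q α β (sconst N q)) (torsionCompatibilityMap_surjective hq0.ne' hQ hα)
    (0, q - q⁻¹, 0)
  refine ⟨A, hA.trans ?_, by simpa using hdim⟩
  ext l
  simp only [Set.mem_preimage, Set.mem_singleton_iff, torsionCompatibilityMap, LinearMap.coe_mk,
    AddHom.coe_mk, Prod.mk.injEq]
  exact and_congr sub_eq_zero (and_congr sub_eq_iff_eq_add' Iff.rfl)

/-- For the alternative compatibility notion of Appendix B, the set of coefficient tuples
`(λ₁,…,λ₆) ∈ ℝ⁶` of Levi-Civita connections on `Γ_{±,z}` over `SU_q(N)`—i.e. the solutions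
of the torsion equations `Qλ₃ = Qλ₄ = qλ₅ − (Q² + 1)λ₆ + Q` together with the single
metric-compatibility equation `λ₂α − λ₃(α + 𝔰β) − λ₅β − q⁻¹λ₆β = 0`—is an affine subspace
of `ℝ⁶` of dimension 3.  (Here `Q = q − q⁻¹` and `l 0 = λ₁, …, l 5 = λ₆`.) -/
theorem appendixB_levi_civita_three_parameters (N : ℕ) (hN : 2 ≤ N)
    (q : ℝ) (hq0 : 0 < q) (hq1 : q ≠ 1) (α β : ℝ) (hα : α ≠ 0)
    (hαβ : α + sconst N q * β ≠ 0) :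
    ∃ A : AffineSubspace ℝ (Fin 6 → ℝ),
      (A : Set (Fin 6 → ℝ)) =
        {l : Fin 6 → ℝ |
          (q - q⁻¹) * l 2 = (q - q⁻¹) * l 3 ∧
          (q - q⁻¹) * l 3 = q * l 4 - ((q - q⁻¹) ^ 2 + 1) * l 5 + (q - q⁻¹) ∧
          l 1 * α - l 2 * (α + sconst N q * β) - l 4 * β - q⁻¹ * l 5 * β = 0} ∧
      Module.finrank ℝ A.direction = 3 :=
  appendixB_levi_civita_three_parameters_general N q hq0 hq1 α β hα

end Stmt11
end
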